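/- arXiv:1501.05335 — 3 statements merged into one kernel-verified Lean document; each statement's English description precedes it below -/
import Mathlib

section
/- Let P = conv{v₀, v₁, v₂} ⊂ ℚ² be a Fano triangle and let (λ₀, λ₁, λ₂) ∈ ℤ³ be pairwise coprime positive integers such that λ₀v₀ + λ₁v₁ + λ₂v₂ = 0. Then Vol(P) · Vol(P*) = (λ₀ + λ₁ + λ₂)³ / (λ₀λ₁λ₂). -/
open scoped Pointwise

namespace FanoPaper

abbrev NZ : Type := ℤ × ℤ
abbrev NQ : Type := ℚ × ℚ

/-- Embedding of the lattice `N = ℤ²` into `N ⊗ ℚ = ℚ²`. -/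
def ι (v : NZ) : NQ := ((v.1 : ℚ), (v.2 : ℚ))

/-- Pairing between `M = Hom(N, ℤ)` (identified with `ℤ²`) and `N`. -/
def dotZ (w v : NZ) : ℤ := w.1 * v.1 + w.2 * v.2

/-- Pairing between `M` and `N ⊗ ℚ`. -/
def dotQ (w : NZ) (x : NQ) : ℚ := (w.1 : ℚ) * x.1 + (w.2 : ℚ) * x.2

/-- The determinant `u ∧ u' = u₁u'₂ − u₂u'₁`. -/
def wedge (u v : NZ) : ℤ := u.1 * v.2 - u.2 * v.1

/-- A lattice vector is primitive if its coordinates are coprime. -/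
def Primitive (v : NZ) : Prop := IsCoprime v.1 v.2

/-- A Fano polygon: the convex hull of a finite set of primitive lattice vertices,
containing the origin in its strict interior; `verts` is exactly the vertex
(extreme point) set. -/
structure FanoPolygon where
  verts : Finset NZ
  verts_nonempty : verts.Nonempty
  verts_primitive : ∀ v ∈ verts, Primitive v
  zero_mem_interior : (0 : NQ) ∈ interior (convexHull ℚ (ι '' (verts : Set NZ)))
  verts_extreme : ∀ v ∈ verts, ι v ∉ convexHull ℚ (ι '' ((verts.erase v : Finset NZ) : Set NZ))

namespace FanoPolygon

/-- The polygon itself, as a subset of `ℚ²`. -/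
def hull (P : FanoPolygon) : Set NQ := convexHull ℚ (ι '' (P.verts : Set NZ))

/-- `h_min := min w(P)`. -/
def hMin (P : FanoPolygon) (w : NZ) : ℤ := P.verts.inf' P.verts_nonempty (dotZ w)

/-- `h_max := max w(P)`. -/
def hMax (P : FanoPolygon) (w : NZ) : ℤ := P.verts.sup' P.verts_nonempty (dotZ w)

/-- `w` is the primitive inner normal vector of an edge of `P`:
`w` is primitive and attains its minimum on `P` at (at least) two vertices. -/
def IsEdgeNormal (P : FanoPolygon) (w : NZ) : Prop :=
  Primitive w ∧ 2 ≤ (P.verts.filter (fun v => dotZ w v = P.hMin w)).card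

/-- The edge of `P` with inner normal `w`, i.e. the face on which `w` is minimal. -/
def edge (P : FanoPolygon) (w : NZ) : Set NQ :=
  {x | x ∈ P.hull ∧ dotQ w x = (P.hMin w : ℚ)}

/-- The height (local index) `r_E` of the edge with inner normal `w`. -/
def height (P : FanoPolygon) (w : NZ) : ℤ := -(P.hMin w)

/-- The width `k_E = |E ∩ N| − 1` of the edge with inner normal `w`. -/
noncomputable def width (P : FanoPolygon) (w : NZ) : ℕ :=
  {v : NZ | ι v ∈ P.edge w}.ncard - 1

/-- `w_h(P) := conv{x ∈ P ∩ N : w(x) = h}`. -/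
def slice (P : FanoPolygon) (w : NZ) (h : ℤ) : Set NQ :=
  convexHull ℚ (ι '' {v : NZ | ι v ∈ P.hull ∧ dotZ w v = h})

end FanoPolygon

/-- The factor `F = conv{0, v}`. -/
def factor (v : NZ) : Set NQ := convexHull ℚ {(0 : NQ), ι v}

/-- A (possibly empty) lattice polytope in `ℚ²`. -/
def IsLatticePolytope (S : Set NQ) : Prop :=
  ∃ T : Finset NZ, S = convexHull ℚ (ι '' (T : Set NZ))

/-- The data `{G_h}` required to mutate `P` with respect to `w` with factor `conv{0, v}`:
for each `h_min ≤ h ≤ −1`, `G_h` is a lattice polytope with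
`{vertices of P at height h} ⊆ G_h + |h|·F ⊆ w_h(P)`. -/
def MutationData (P : FanoPolygon) (w v : NZ) (G : ℤ → Set NQ) : Prop :=
  ∀ h : ℤ, P.hMin w ≤ h → h ≤ -1 →
    IsLatticePolytope (G h) ∧
    ι '' {x : NZ | x ∈ P.verts ∧ dotZ w x = h} ⊆ G h + ((|h| : ℚ) • factor v) ∧
    G h + ((|h| : ℚ) • factor v) ⊆ P.slice w h

/-- The mutated set `mut_w(P, F)`. -/
def mutSet (P : FanoPolygon) (w v : NZ) (G : ℤ → Set NQ) : Set NQ :=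
  convexHull ℚ ((⋃ h ∈ Finset.Icc (P.hMin w) (-1 : ℤ), G h) ∪
    ⋃ h ∈ Finset.Icc (0 : ℤ) (P.hMax w), (P.slice w h + ((h : ℚ) • factor v)))

/-- `Q` is the mutation of `P` with respect to `w` with factor `conv{0, v}`. -/
def IsMutationWith (P : FanoPolygon) (w v : NZ) (Q : FanoPolygon) : Prop :=
  ∃ G : ℤ → Set NQ, MutationData P w v G ∧ Q.hull = mutSet P w v G

/-- `Q` is a mutation of `P`. -/
def IsMutation (P Q : FanoPolygon) : Prop :=
  ∃ w v : NZ, P.IsEdgeNormal w ∧ Primitive v ∧ dotZ w v = 0 ∧ IsMutationWith P w v Q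

/-- `GL₂(ℤ)`-equivalence of Fano polygons. -/
def GLEquiv (P Q : FanoPolygon) : Prop :=
  ∃ f : NZ ≃ₗ[ℤ] NZ, Q.verts = P.verts.image f

/-- Mutation-equivalence: the equivalence relation generated by mutations and
`GL₂(ℤ)`-transformations. -/
def MutEquiv (P Q : FanoPolygon) : Prop :=
  Relation.EqvGen (fun A B => IsMutation A B ∨ GLEquiv A B) P Q

/-- There exists a mutation of `P` with respect to `w`: a factor and lattice polytopes
`{G_h}` satisfying the defining inclusions. -/
def AdmitsMutation (P : FanoPolygon) (w : NZ) : Prop :=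
  ∃ v : NZ, Primitive v ∧ dotZ w v = 0 ∧ ∃ G : ℤ → Set NQ, MutationData P w v G

namespace FanoPolygon

/-- The number of lattice points on the boundary of `P`. -/
noncomputable def boundaryPts (P : FanoPolygon) : ℕ :=
  {v : NZ | ι v ∈ frontier P.hull}.ncard

/-- The number of lattice points in the strict interior of `P`. -/
noncomputable def interiorPts (P : FanoPolygon) : ℕ :=
  {v : NZ | ι v ∈ interior P.hull}.ncard

/-- `P` is minimal if every mutation has at least as many boundary lattice points. -/
def Minimal (P : FanoPolygon) : Prop :=
  ∀ Q : FanoPolygon, IsMutation P Q → P.boundaryPts ≤ Q.boundaryPts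

/-- Empty residual basket: `r_E ∣ k_E` for every edge `E` of `P`. -/
def EmptyBasket (P : FanoPolygon) : Prop :=
  ∀ w : NZ, P.IsEdgeNormal w → P.height w ∣ (P.width w : ℤ)

/-- The number `n` of primitive T-cones of `P`: `n = Σ_E ⌊k_E / r_E⌋`. -/
noncomputable def tConeCount (P : FanoPolygon) : ℕ :=
  ∑ᶠ w ∈ {w : NZ | P.IsEdgeNormal w}, P.width w / (P.height w).toNat

/-- All residual singularities of `P` are of type `1/3(1,1)`: every edge `E`
satisfies `r_E ∣ k_E` or (`r_E = 3` and `k_E ≡ 1 mod 3`). -/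
def ThirdBasket (P : FanoPolygon) : Prop :=
  ∀ w : NZ, P.IsEdgeNormal w →
    P.height w ∣ (P.width w : ℤ) ∨ (P.height w = 3 ∧ P.width w % 3 = 1)

/-- The number `m` of residual singularities `1/3(1,1)`:
the number of edges `E` with `r_E = 3` and `3 ∤ k_E`. -/
noncomputable def thirdCount (P : FanoPolygon) : ℕ :=
  {w : NZ | P.IsEdgeNormal w ∧ P.height w = 3 ∧ ¬ (3 ∣ P.width w)}.ncard

/-- The number of residual lattice points of `P`:
`Σ_E ( q_E(r_E − 1)/2 + max(q_E − 1, 0) )` with `q_E = k_E mod r_E`. -/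
noncomputable def residualCount (P : FanoPolygon) : ℚ :=
  ∑ᶠ w ∈ {w : NZ | P.IsEdgeNormal w},
    (((((P.width w : ℤ) % P.height w) : ℤ) : ℚ) * ((P.height w : ℚ) - 1) / 2
      + max (((((P.width w : ℤ) % P.height w) : ℤ) : ℚ) - 1) 0)

end FanoPolygon

/-- Embedding of the lattice into `ℝ²`, used to measure volumes. -/
def ιR (v : NZ) : ℝ × ℝ := ((v.1 : ℝ), (v.2 : ℝ))

namespace FanoPolygon

/-- The polygon, realised in `ℝ²`. -/
def hullR (P : FanoPolygon) : Set (ℝ × ℝ) := convexHull ℝ (ιR '' (P.verts : Set NZ))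

/-- Normalised volume (twice the Euclidean area) of `P`. -/
noncomputable def nvol (P : FanoPolygon) : ℝ := 2 * (MeasureTheory.volume P.hullR).toReal

/-- The dual polygon `P* = {u : u(x) ≥ −1 ∀ x ∈ P}`, realised in `ℝ²`. -/
def dualR (P : FanoPolygon) : Set (ℝ × ℝ) :=
  {u : ℝ × ℝ | ∀ x ∈ P.hullR, -1 ≤ u.1 * x.1 + u.2 * x.2}

/-- Normalised volume of the dual polygon `P*`. -/
noncomputable def nvolDual (P : FanoPolygon) : ℝ := 2 * (MeasureTheory.volume P.dualR).toReal

/-- The sublattice `Λ_P ⊆ M` generated by the primitive inner normal vectors of the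
edges of `P`. -/
def normalLattice (P : FanoPolygon) : Submodule ℤ NZ :=
  Submodule.span ℤ {w : NZ | P.IsEdgeNormal w}

/-- The index `[M : Λ_P]`. -/
noncomputable def latticeIndex (P : FanoPolygon) : ℕ :=
  P.normalLattice.toAddSubgroup.index

/-- A T-edge normal: an edge normal whose edge satisfies `k_E ≥ r_E`. -/
def IsTEdgeNormal (P : FanoPolygon) (w : NZ) : Prop :=
  P.IsEdgeNormal w ∧ P.height w ≤ (P.width w : ℤ)

/-- `ws` enumerates the primitive T-cone normals of `P` with multiplicities:
each T-edge normal `w` occurs exactly `⌊k_E/r_E⌋` times, and nothing else occurs. -/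
def IsTConeEnum (P : FanoPolygon) {n : ℕ} (ws : Fin n → NZ) : Prop :=
  ∀ w : NZ,
    (P.IsTEdgeNormal w →
      (Finset.univ.filter (fun i : Fin n => ws i = w)).card = P.width w / (P.height w).toNat) ∧
    (¬ P.IsTEdgeNormal w → (Finset.univ.filter (fun i : Fin n => ws i = w)).card = 0)

end FanoPolygon

end FanoPaper


/-!
Write the origin as `λ₀v₀ + λ₁v₁ + λ₂v₂ = 0`. Crossing this relation with the vertices shows
`v₁ ∧ v₂ : v₂ ∧ v₀ : v₀ ∧ v₁ = λ₀ : λ₁ : λ₂`, say `vᵢ₊₁ ∧ vᵢ₊₂ = λᵢ t`, and `t ≠ 0` because the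
origin is an interior point. Hence `Vol(P) = |Σ vᵢ ∧ vᵢ₊₁| = (λ₀ + λ₁ + λ₂)|t|`. Since the `λᵢ`
are positive, `P*` is the triangle whose vertices are the linear forms equal to `-1` on the
edges of `P`, and a determinant computation gives
`Vol(P*) = (Σ vᵢ ∧ vᵢ₊₁)² / |v₀ ∧ v₁ · v₁ ∧ v₂ · v₂ ∧ v₀| = (λ₀ + λ₁ + λ₂)² / (λ₀λ₁λ₂|t|)`.
-/

open MeasureTheory Set

namespace FanoPaper

section Cross

variable {R : Type*} [CommRing R]

def cross (a b : R × R) : R := a.1 * b.2 - a.2 * b.1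

@[simp] theorem cross_self (a : R × R) : cross a a = 0 := by
  simp only [cross]; ring

theorem cross_sub_sub (a b c : R × R) :
    cross (b - a) (c - a) = cross a b + cross b c + cross c a := by
  simp only [cross, Prod.fst_sub, Prod.snd_sub]; ring

theorem mul_cross_eq_mul_cross {a₀ a₁ a₂ : R × R} {l₀ l₁ l₂ : R}
    (hsum : l₀ • a₀ + l₁ • a₁ + l₂ • a₂ = 0) : l₁ * cross a₁ a₂ = l₀ * cross a₂ a₀ := by
  have h₁ := congrArg Prod.fst hsum
  have h₂ := congrArg Prod.snd hsum
  simp only [Prod.fst_add, Prod.snd_add, Prod.smul_fst, Prod.smul_snd, smul_eq_mul,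
    Prod.fst_zero, Prod.snd_zero] at h₁ h₂
  simp only [cross]
  linear_combination a₂.2 * h₁ - a₂.1 * h₂

theorem cross_eq_weight_mul {K : Type*} [Field K] {a₀ a₁ a₂ : K × K} {l₀ l₁ l₂ : K}
    (hl₀ : l₀ ≠ 0) (hsum : l₀ • a₀ + l₁ • a₁ + l₂ • a₂ = 0) :
    cross a₂ a₀ = l₁ * (cross a₁ a₂ / l₀) ∧ cross a₀ a₁ = l₂ * (cross a₁ a₂ / l₀) := by
  have h₁ := mul_cross_eq_mul_cross hsum
  have h₂ := mul_cross_eq_mul_cross ((add_rotate _ _ _).trans hsum)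
  constructor <;> field_simp
  · linear_combination -h₁
  · linear_combination h₂

theorem cross_ne_zero_of_nonempty_interior {𝕜 : Type*} [NontriviallyNormedField 𝕜]
    [LinearOrder 𝕜] [IsStrictOrderedRing 𝕜] {a₀ a₁ a₂ : 𝕜 × 𝕜} {l₀ l₁ l₂ : 𝕜} (hl₀ : l₀ ≠ 0)
    (hsum : l₀ • a₀ + l₁ • a₁ + l₂ • a₂ = 0) (ha₁ : a₁ ≠ 0) (hint : (interior (convexHull 𝕜 {a₀, a₁, a₂})).Nonempty) :
    cross a₁ a₂ ≠ 0 := by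
  intro h
  let f : 𝕜 × 𝕜 →ₗ[𝕜] 𝕜 := a₁.1 • LinearMap.snd 𝕜 𝕜 𝕜 - a₁.2 • LinearMap.fst 𝕜 𝕜 𝕜
  have hf (x : 𝕜 × 𝕜) : f x = cross a₁ x := by simp [f, cross]
  have h₀ : cross a₁ a₀ = 0 := by
    have := (cross_eq_weight_mul hl₀ hsum).2
    rw [h, zero_div, mul_zero] at this
    simp only [cross] at this ⊢
    linear_combination -this
  have hsub : convexHull 𝕜 {a₀, a₁, a₂} ⊆ (LinearMap.ker f : Set (𝕜 × 𝕜)) := by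
    refine convexHull_min ?_ (LinearMap.ker f).convex
    simp only [insert_subset_iff, singleton_subset_iff, SetLike.mem_coe, LinearMap.mem_ker, hf]
    exact ⟨h₀, by simp [cross, mul_comm], h⟩
  have htop := (LinearMap.ker f).eq_top_of_nonempty_interior' (hint.mono (interior_mono hsub))
  have e₁ : f (1, 0) = 0 := by simp [← LinearMap.mem_ker, htop]
  have e₂ : f (0, 1) = 0 := by simp [← LinearMap.mem_ker, htop]
  exact ha₁ (Prod.ext (by simpa [hf, cross] using e₂) (by simpa [hf, cross] using e₁))

end Cross

theorem smul_add_smul_add_smul_mem_convexHull {E : Type*} [AddCommGroup E] [Module ℝ E]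
    (a b c : E) {x y z : ℝ} (hx : 0 ≤ x) (hy : 0 ≤ y) (hz : 0 ≤ z) (hxyz : x + y + z = 1) :
    x • a + y • b + z • c ∈ convexHull ℝ {a, b, c} := by
  have h := (convex_convexHull ℝ ({a, b, c} : Set E)).sum_mem
    (t := Finset.univ) (w := ![x, y, z]) (z := ![a, b, c])
    (fun i _ => by fin_cases i <;> assumption)
    (by simp [Fin.sum_univ_three, hxyz])
    (fun i _ => by fin_cases i <;> exact subset_convexHull ℝ _ (by simp))
  simpa [Fin.sum_univ_three] using h

theorem convexHull_unitTriangle :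
    convexHull ℝ {((0 : ℝ), (0 : ℝ)), (1, 0), (0, 1)} =
      {p : ℝ × ℝ | 0 ≤ p.1 ∧ 0 ≤ p.2 ∧ p.1 + p.2 ≤ 1} := by
  refine Subset.antisymm (convexHull_min ?_ ?_) ?_
  · simp [insert_subset_iff]
  · exact (convex_halfSpace_ge (LinearMap.fst ℝ ℝ ℝ).isLinear 0).inter
      ((convex_halfSpace_ge (LinearMap.snd ℝ ℝ ℝ).isLinear 0).inter
        (convex_halfSpace_le (LinearMap.fst ℝ ℝ ℝ + LinearMap.snd ℝ ℝ ℝ).isLinear 1))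
  · rintro ⟨x, y⟩ ⟨hx, hy, hxy⟩
    simpa using smul_add_smul_add_smul_mem_convexHull ((0, 0) : ℝ × ℝ) (1, 0) (0, 1)
      (sub_nonneg.2 hxy) hx hy (by ring : 1 - (x + y) + x + y = 1)

theorem volume_unitTriangle :
    volume {p : ℝ × ℝ | 0 ≤ p.1 ∧ 0 ≤ p.2 ∧ p.1 + p.2 ≤ 1} = ENNReal.ofReal (1 / 2) := by
  have hmeas : MeasurableSet {p : ℝ × ℝ | 0 ≤ p.1 ∧ 0 ≤ p.2 ∧ p.1 + p.2 ≤ 1} :=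
    (measurableSet_le measurable_const measurable_fst).inter
      ((measurableSet_le measurable_const measurable_snd).inter
        (measurableSet_le (measurable_fst.add measurable_snd) measurable_const))
  have hslice (x : ℝ) : volume (Prod.mk x ⁻¹' {p : ℝ × ℝ | 0 ≤ p.1 ∧ 0 ≤ p.2 ∧ p.1 + p.2 ≤ 1})
      = (Icc 0 1).indicator (fun x => ENNReal.ofReal (1 - x)) x := by
    rcases lt_or_ge x 0 with hx | hx
    · rw [indicator_of_notMem (fun h => hx.not_ge h.1)]
      convert measure_empty (μ := (volume : Measure ℝ))
      ext y; simp [hx.not_ge]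
    · have : Prod.mk x ⁻¹' {p : ℝ × ℝ | 0 ≤ p.1 ∧ 0 ≤ p.2 ∧ p.1 + p.2 ≤ 1} = Icc 0 (1 - x) := by
        ext y; simp [hx, le_sub_iff_add_le']
      rw [this, Real.volume_Icc, sub_zero]
      by_cases hx₁ : x ≤ 1
      · rw [indicator_of_mem (mem_Icc.2 ⟨hx, hx₁⟩)]
      · rw [indicator_of_notMem (fun h => hx₁ h.2), ENNReal.ofReal_eq_zero]
        linarith
  rw [Measure.volume_eq_prod, Measure.prod_apply hmeas]
  simp_rw [hslice]
  rw [lintegral_indicator measurableSet_Icc, ← ofReal_integral_eq_lintegral_ofReal,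
    integral_Icc_eq_integral_Ioc, ← intervalIntegral.integral_of_le zero_le_one,
    intervalIntegral.integral_sub intervalIntegrable_const intervalIntegral.intervalIntegrable_id]
  · norm_num [integral_id]
  · exact (continuous_const.sub continuous_id).integrableOn_Icc
  · filter_upwards [ae_restrict_mem measurableSet_Icc] with x hx
    simpa using hx.2

theorem volume_convexHull_triangle (a b c : ℝ × ℝ) :
    volume (convexHull ℝ {a, b, c}) = ENNReal.ofReal (|cross (b - a) (c - a)| / 2) := by
  set L : ℝ × ℝ →ₗ[ℝ] ℝ × ℝ :=
    (LinearMap.fst ℝ ℝ ℝ).smulRight (b - a) + (LinearMap.snd ℝ ℝ ℝ).smulRight (c - a)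
  have hdet : LinearMap.det L = cross (b - a) (c - a) := by
    rw [← LinearMap.det_toMatrix (Module.Basis.finTwoProd ℝ), Matrix.det_fin_two]
    simp [LinearMap.toMatrix_apply, L, cross]
    ring
  have himage : convexHull ℝ {a, b, c} = a +ᵥ (L '' convexHull ℝ {(0, 0), (1, 0), (0, 1)}) := by
    rw [L.image_convexHull, ← convexHull_vadd]
    congr 1
    simp [image_insert_eq, L, vadd_set_insert]
  rw [himage, measure_vadd, Measure.addHaar_image_linearMap, hdet, convexHull_unitTriangle,
    volume_unitTriangle, ← ENNReal.ofReal_mul (abs_nonneg _)]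
  ring_nf

theorem two_mul_volume_convexHull_triangle (a b c : ℝ × ℝ) :
    2 * (volume (convexHull ℝ {a, b, c})).toReal = |cross a b + cross b c + cross c a| := by
  rw [volume_convexHull_triangle, ENNReal.toReal_ofReal (by positivity), cross_sub_sub]
  ring

section Polar

def dot (u x : ℝ × ℝ) : ℝ := u.1 * x.1 + u.2 * x.2

@[simp] theorem dot_add_left (u w x : ℝ × ℝ) : dot (u + w) x = dot u x + dot w x := by
  simp only [dot, Prod.fst_add, Prod.snd_add]; ring

@[simp] theorem dot_smul_left (c : ℝ) (u x : ℝ × ℝ) : dot (c • u) x = c * dot u x := by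
  simp only [dot, Prod.smul_fst, Prod.smul_snd, smul_eq_mul]; ring

theorem weighted_dot_eq_zero {a₀ a₁ a₂ : ℝ × ℝ} {l₀ l₁ l₂ : ℝ}
    (hsum : l₀ • a₀ + l₁ • a₁ + l₂ • a₂ = 0) (u : ℝ × ℝ) :
    l₀ * dot u a₀ + l₁ * dot u a₁ + l₂ * dot u a₂ = 0 := by
  have h₁ := congrArg Prod.fst hsum
  have h₂ := congrArg Prod.snd hsum
  simp only [Prod.fst_add, Prod.snd_add, Prod.smul_fst, Prod.smul_snd, smul_eq_mul,
    Prod.fst_zero, Prod.snd_zero] at h₁ h₂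
  simp only [dot]
  linear_combination u.1 * h₁ + u.2 * h₂

theorem eq_of_dot_eq {b c u w : ℝ × ℝ} (h : cross b c ≠ 0) (hb : dot u b = dot w b)
    (hc : dot u c = dot w c) : u = w := by
  simp only [dot] at hb hc
  refine Prod.ext (mul_right_cancel₀ h ?_) (mul_right_cancel₀ h ?_) <;> simp only [cross]
  · linear_combination c.2 * hb - b.2 * hc
  · linear_combination b.1 * hc - c.1 * hb

def polar (S : Set (ℝ × ℝ)) : Set (ℝ × ℝ) := {u | ∀ x ∈ S, -1 ≤ dot u x}

theorem FanoPolygon.dualR_eq_polar (P : FanoPolygon) : P.dualR = polar P.hullR := rfl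

theorem convex_polar (S : Set (ℝ × ℝ)) : Convex ℝ (polar S) := by
  intro u hu w hw a b ha hb hab x hx
  have hux := hu x hx
  have hwx := hw x hx
  simp only [dot_add_left, dot_smul_left]
  nlinarith

theorem polar_convexHull (S : Set (ℝ × ℝ)) : polar (convexHull ℝ S) = polar S := by
  refine Subset.antisymm (fun u hu x hx => hu x (subset_convexHull ℝ S hx)) fun u hu => ?_
  have hconv : Convex ℝ {x | -1 ≤ dot u x} :=
    convex_halfSpace_ge ⟨fun x y => by simp only [dot, Prod.fst_add, Prod.snd_add]; ring,
      fun c x => by simp only [dot, Prod.smul_fst, Prod.smul_snd, smul_eq_mul]; ring⟩ (-1)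
  exact fun x hx => convexHull_min hu hconv hx

/-- The linear form equal to `-1` at `b` and `c`: the vertex of the polar dual to the edge
`[b, c]`. -/
noncomputable def edgeDual (b c : ℝ × ℝ) : ℝ × ℝ :=
  ((b.2 - c.2) / cross b c, (c.1 - b.1) / cross b c)

theorem dot_edgeDual (b c x : ℝ × ℝ) :
    dot (edgeDual b c) x = -(cross b x + cross x c) / cross b c := by
  simp only [dot, edgeDual, cross]; ring

theorem dot_edgeDual_left {b c : ℝ × ℝ} (h : cross b c ≠ 0) : dot (edgeDual b c) b = -1 := by
  rw [dot_edgeDual, cross_self, zero_add, neg_div, div_self h]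

theorem dot_edgeDual_right {b c : ℝ × ℝ} (h : cross b c ≠ 0) : dot (edgeDual b c) c = -1 := by
  rw [dot_edgeDual, cross_self, add_zero, neg_div, div_self h]

theorem dot_edgeDual_opposite {a₀ a₁ a₂ : ℝ × ℝ} {l₀ l₁ l₂ : ℝ} (hl₀ : l₀ ≠ 0)
    (hsum : l₀ • a₀ + l₁ • a₁ + l₂ • a₂ = 0) (h : cross a₁ a₂ ≠ 0) :
    dot (edgeDual a₁ a₂) a₀ = (l₁ + l₂) / l₀ := by
  rw [eq_div_iff hl₀]
  linear_combination weighted_dot_eq_zero hsum (edgeDual a₁ a₂) - l₁ * dot_edgeDual_left h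
    - l₂ * dot_edgeDual_right h

end Polar

section Triangle

variable {a₀ a₁ a₂ : ℝ × ℝ} {l₀ l₁ l₂ : ℝ}

theorem edgeDual_mem_polar (hl₀ : 0 < l₀) (hl₁ : 0 < l₁) (hl₂ : 0 < l₂)
    (hsum : l₀ • a₀ + l₁ • a₁ + l₂ • a₂ = 0) (h : cross a₁ a₂ ≠ 0) :
    edgeDual a₁ a₂ ∈ polar {a₀, a₁, a₂} := by
  have hopp : 0 ≤ dot (edgeDual a₁ a₂) a₀ := by
    rw [dot_edgeDual_opposite hl₀.ne' hsum h]; positivity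
  simp only [polar, mem_insert_iff, mem_singleton_iff, forall_eq_or_imp, forall_eq]
  exact ⟨by linarith, (dot_edgeDual_left h).ge, (dot_edgeDual_right h).ge⟩

theorem mem_convexHull_edgeDual_of_mem_polar (hl₀ : 0 < l₀) (hl₁ : 0 < l₁) (hl₂ : 0 < l₂)
    (hsum : l₀ • a₀ + l₁ • a₁ + l₂ • a₂ = 0) (h₀ : cross a₁ a₂ ≠ 0) (h₁ : cross a₂ a₀ ≠ 0)
    (h₂ : cross a₀ a₁ ≠ 0) {u : ℝ × ℝ} (hu : u ∈ polar {a₀, a₁, a₂}) :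
    u ∈ convexHull ℝ {edgeDual a₁ a₂, edgeDual a₂ a₀, edgeDual a₀ a₁} := by
  simp only [polar, mem_insert_iff, mem_singleton_iff, forall_eq_or_imp, forall_eq] at hu
  obtain ⟨hu₀, hu₁, hu₂⟩ := hu
  set L := l₀ + l₁ + l₂
  have hL : 0 < L := by positivity
  have hsum₁ : l₁ • a₁ + l₂ • a₂ + l₀ • a₀ = 0 := (add_rotate _ _ _).symm.trans hsum
  have hsum₂ : l₂ • a₂ + l₀ • a₀ + l₁ • a₁ = 0 := (add_rotate _ _ _).trans hsum
  have hdot := weighted_dot_eq_zero hsum u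
  -- The coefficients sum to `1` by `hdot`; both sides agree on `a₁` and `a₂`, which span.
  have hw : u = (l₀ * (dot u a₀ + 1) / L) • edgeDual a₁ a₂
      + (l₁ * (dot u a₁ + 1) / L) • edgeDual a₂ a₀
      + (l₂ * (dot u a₂ + 1) / L) • edgeDual a₀ a₁ := by
    refine eq_of_dot_eq h₀ ?_ ?_ <;>
      simp only [dot_add_left, dot_smul_left, dot_edgeDual_left, dot_edgeDual_right, h₀, h₁, h₂,
        dot_edgeDual_opposite hl₁.ne' hsum₁ h₁, dot_edgeDual_opposite hl₂.ne' hsum₂ h₂, ne_eq,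
        not_false_eq_true] <;>
      field_simp <;> linear_combination hdot
  rw [hw]
  exact smul_add_smul_add_smul_mem_convexHull _ _ _
    (div_nonneg (mul_nonneg hl₀.le (by linarith)) hL.le)
    (div_nonneg (mul_nonneg hl₁.le (by linarith)) hL.le)
    (div_nonneg (mul_nonneg hl₂.le (by linarith)) hL.le)
    (by field_simp; linear_combination hdot)

theorem polar_triangle (hl₀ : 0 < l₀) (hl₁ : 0 < l₁) (hl₂ : 0 < l₂)
    (hsum : l₀ • a₀ + l₁ • a₁ + l₂ • a₂ = 0) (h : cross a₁ a₂ ≠ 0) :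
    polar {a₀, a₁, a₂} = convexHull ℝ {edgeDual a₁ a₂, edgeDual a₂ a₀, edgeDual a₀ a₁} := by
  have hsum₁ : l₁ • a₁ + l₂ • a₂ + l₀ • a₀ = 0 := (add_rotate _ _ _).symm.trans hsum
  have hsum₂ : l₂ • a₂ + l₀ • a₀ + l₁ • a₁ = 0 := (add_rotate _ _ _).trans hsum
  obtain ⟨e₁, e₂⟩ := cross_eq_weight_mul hl₀.ne' hsum
  have h₁ : cross a₂ a₀ ≠ 0 := by rw [e₁]; exact mul_ne_zero hl₁.ne' (div_ne_zero h hl₀.ne')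
  have h₂ : cross a₀ a₁ ≠ 0 := by rw [e₂]; exact mul_ne_zero hl₂.ne' (div_ne_zero h hl₀.ne')
  refine Subset.antisymm (fun u => mem_convexHull_edgeDual_of_mem_polar hl₀ hl₁ hl₂ hsum h h₁ h₂)
    (convexHull_min ?_ (convex_polar _))
  have hrot₁ : ({a₀, a₁, a₂} : Set (ℝ × ℝ)) = {a₁, a₂, a₀} := by
    rw [insert_comm, pair_comm]
  have hrot₂ : ({a₀, a₁, a₂} : Set (ℝ × ℝ)) = {a₂, a₀, a₁} := by
    rw [hrot₁, insert_comm, pair_comm]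
  simp only [insert_subset_iff, singleton_subset_iff]
  exact ⟨edgeDual_mem_polar hl₀ hl₁ hl₂ hsum h, hrot₁ ▸ edgeDual_mem_polar hl₁ hl₂ hl₀ hsum₁ h₁,
    hrot₂ ▸ edgeDual_mem_polar hl₂ hl₀ hl₁ hsum₂ h₂⟩

theorem cross_edgeDual_edgeDual (b c d e : ℝ × ℝ) :
    cross (edgeDual b c) (edgeDual d e) = cross (b - c) (d - e) / (cross b c * cross d e) := by
  simp only [edgeDual]
  generalize cross b c = D
  generalize cross d e = E
  simp only [cross, Prod.fst_sub, Prod.snd_sub]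
  ring

theorem cross_edgeDual_add_cross_edgeDual_add_cross_edgeDual (h₀ : cross a₁ a₂ ≠ 0)
    (h₁ : cross a₂ a₀ ≠ 0) (h₂ : cross a₀ a₁ ≠ 0) :
    cross (edgeDual a₁ a₂) (edgeDual a₂ a₀) + cross (edgeDual a₂ a₀) (edgeDual a₀ a₁)
      + cross (edgeDual a₀ a₁) (edgeDual a₁ a₂)
      = (cross a₀ a₁ + cross a₁ a₂ + cross a₂ a₀) ^ 2
        / (cross a₀ a₁ * cross a₁ a₂ * cross a₂ a₀) := by
  have hcyc (a b c : ℝ × ℝ) : cross (b - c) (c - a) = cross a b + cross b c + cross c a := by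
    simp only [cross, Prod.fst_sub, Prod.snd_sub]; ring
  simp only [cross_edgeDual_edgeDual, hcyc]
  field_simp
  ring

theorem two_mul_volume_mul_two_mul_volume_polar_triangle (hl₀ : 0 < l₀) (hl₁ : 0 < l₁)
    (hl₂ : 0 < l₂) (hsum : l₀ • a₀ + l₁ • a₁ + l₂ • a₂ = 0) (h : cross a₁ a₂ ≠ 0) :
    2 * (volume (convexHull ℝ {a₀, a₁, a₂})).toReal * (2 * (volume (polar {a₀, a₁, a₂})).toReal)
      = (l₀ + l₁ + l₂) ^ 3 / (l₀ * l₁ * l₂) := by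
  obtain ⟨h₁, h₂⟩ := cross_eq_weight_mul hl₀.ne' hsum
  set t := cross a₁ a₂ / l₀
  have h₀ : cross a₁ a₂ = l₀ * t := (mul_div_cancel₀ _ hl₀.ne').symm
  have ht : t ≠ 0 := div_ne_zero h hl₀.ne'
  rw [polar_triangle hl₀ hl₁ hl₂ hsum h, two_mul_volume_convexHull_triangle,
    two_mul_volume_convexHull_triangle, cross_edgeDual_add_cross_edgeDual_add_cross_edgeDual h
      (by rw [h₁]; positivity) (by rw [h₂]; positivity), h₀, h₁, h₂, ← abs_mul]
  have key : (l₂ * t + l₀ * t + l₁ * t) * ((l₂ * t + l₀ * t + l₁ * t) ^ 2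
      / (l₂ * t * (l₀ * t) * (l₁ * t))) = (l₀ + l₁ + l₂) ^ 3 / (l₀ * l₁ * l₂) := by
    field_simp
    ring
  rw [key, abs_of_pos (by positivity)]

end Triangle

section Casts

variable {R : Type*} [CommRing R]

theorem cross_intCast (v w : ℤ × ℤ) :
    cross ((v.1 : R), (v.2 : R)) ((w.1 : R), (w.2 : R)) = ((cross v w : ℤ) : R) := by
  simp only [cross]; push_cast; ring

theorem intCast_weighted_sum_eq_zero {v₀ v₁ v₂ : ℤ × ℤ} {l₀ l₁ l₂ : ℤ}
    (hsum : l₀ • v₀ + l₁ • v₁ + l₂ • v₂ = 0) :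
    (l₀ : R) • ((v₀.1 : R), (v₀.2 : R)) + (l₁ : R) • ((v₁.1 : R), (v₁.2 : R))
      + (l₂ : R) • ((v₂.1 : R), (v₂.2 : R)) = 0 := by
  have h₁ := congrArg (fun v : ℤ × ℤ => (v.1 : R)) hsum
  have h₂ := congrArg (fun v : ℤ × ℤ => (v.2 : R)) hsum
  simp only [Prod.fst_add, Prod.snd_add, Prod.smul_fst, Prod.smul_snd, smul_eq_mul,
    Prod.fst_zero, Prod.snd_zero] at h₁ h₂
  push_cast at h₁ h₂
  exact Prod.ext (by simpa using h₁) (by simpa using h₂)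

end Casts

theorem ι_ne_zero {v : NZ} (hv : Primitive v) : ι v ≠ 0 := by
  intro h
  simp only [ι, Prod.mk_eq_zero, Int.cast_eq_zero] at h
  rw [Primitive, h.1, h.2] at hv
  exact not_isCoprime_zero_zero hv

end FanoPaper

open FanoPaper in
theorem vol_mul_dual_vol_of_fano_triangle_general (P : FanoPolygon) (v0 v1 v2 : NZ)
    (hV : P.verts = {v0, v1, v2})
    (l0 l1 l2 : ℤ) (h0 : 0 < l0) (h1 : 0 < l1) (h2 : 0 < l2)
    (hsum : l0 • v0 + l1 • v1 + l2 • v2 = 0) :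
    P.nvol * P.nvolDual = ((l0 : ℝ) + l1 + l2) ^ 3 / ((l0 : ℝ) * l1 * l2) := by
  have hcross : cross v1 v2 ≠ 0 := by
    have hint := P.zero_mem_interior
    simp only [hV, Finset.coe_insert, Finset.coe_singleton, image_insert_eq, image_singleton]
      at hint
    have := cross_ne_zero_of_nonempty_interior (by positivity : (l0 : ℚ) ≠ 0)
      (intCast_weighted_sum_eq_zero hsum) (ι_ne_zero (P.verts_primitive v1 (by simp [hV])))
      ⟨0, hint⟩
    rw [cross_intCast] at this
    exact_mod_cast this
  rw [FanoPolygon.nvol, FanoPolygon.nvolDual, FanoPolygon.dualR_eq_polar, FanoPolygon.hullR,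
    polar_convexHull, hV]
  simp only [Finset.coe_insert, Finset.coe_singleton, image_insert_eq, image_singleton]
  refine two_mul_volume_mul_two_mul_volume_polar_triangle (by positivity) (by positivity)
    (by positivity) (intCast_weighted_sum_eq_zero hsum) ?_
  rw [ιR, ιR, cross_intCast]
  exact_mod_cast hcross

open FanoPaper in
/-- For a Fano triangle with pairwise coprime positive weights `(λ₀, λ₁, λ₂)`,
`Vol(P) · Vol(P*) = (λ₀ + λ₁ + λ₂)³ / (λ₀λ₁λ₂)`. -/
theorem vol_mul_dual_vol_of_fano_triangle (P : FanoPolygon) (v0 v1 v2 : NZ)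
    (hV : P.verts = {v0, v1, v2}) (hcard : P.verts.card = 3)
    (l0 l1 l2 : ℤ) (h0 : 0 < l0) (h1 : 0 < l1) (h2 : 0 < l2)
    (hc01 : IsCoprime l0 l1) (hc02 : IsCoprime l0 l2) (hc12 : IsCoprime l1 l2)
    (hsum : l0 • v0 + l1 • v1 + l2 • v2 = 0) :
    P.nvol * P.nvolDual = ((l0 : ℝ) + l1 + l2) ^ 3 / ((l0 : ℝ) * l1 * l2) :=
  vol_mul_dual_vol_of_fano_triangle_general P v0 v1 v2 hV l0 l1 l2 h0 h1 h2 hsum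
end

section
/- Let P ⊂ ℚ² be a Fano polygon and let E be an edge of P with primitive inner normal vector w = w_E. Then there exists a mutation of P with respect to w (i.e. there exist a factor F = conv{0, v} with v primitive, w(v) = 0, and lattice polygons {G_h} satisfying the defining inclusions) if and only if k_E ≥ r_E, that is, |E ∩ N| − 1 ≥ r_E. -/
open scoped Pointwise

/-!
If `G + r F ⊆ E` for a nonempty lattice polygon `G` (the condition at height `h_min = -r`), then
the edge contains a lattice segment of lattice length `r`, whence `k_E ≥ r_E`.

Conversely, suppose `k_E ≥ r_E`. For `h_min ≤ h < 0`, the slice of `P` at height `h` contains the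
edge scaled by `h / h_min`, a segment of length at least `|h|`. The vertices of `P` at height `h`
are extreme points of this slice, so they can be covered by a lattice segment of length at least
`|h|` inside `P`; that segment is `G_h + |h| F` for a lattice segment `G_h`.
-/

section Convexity

variable {𝕜 E F : Type*} [Field 𝕜] [LinearOrder 𝕜] [IsStrictOrderedRing 𝕜]
  [AddCommGroup E] [Module 𝕜 E] [AddCommGroup F] [Module 𝕜 F]

theorem mem_extremePoints_convexHull_of_notMem_convexHull_sdiff {s : Set E} {x : E}
    (hxs : x ∈ s) (hx : x ∉ convexHull 𝕜 (s \ {x})) :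
    x ∈ (convexHull 𝕜 s).extremePoints 𝕜 := by
  rcases (s \ {x}).eq_empty_or_nonempty with hs | hs
  · rcases Set.subset_singleton_iff_eq.1 (Set.sdiff_eq_empty.1 hs) with hs | hs
    · simp [hs] at hxs
    · simp [hs]
  refine mem_extremePoints.2 ⟨subset_convexHull 𝕜 s hxs, ?_⟩
  rw [← Set.insert_sdiff_self_of_mem hxs, convexHull_insert hs]
  rintro p hp q hq ⟨a, b, ha, hb, hab, hpq⟩
  obtain ⟨y₁, hy₁, k₁, hk₁, a₁, b₁, ha₁, hb₁, hab₁, rfl⟩ := mem_convexJoin.1 hp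
  obtain ⟨y₂, hy₂, k₂, hk₂, a₂, b₂, ha₂, hb₂, hab₂, rfl⟩ := mem_convexJoin.1 hq
  rw [Set.mem_singleton_iff] at hy₁ hy₂
  subst y₁ y₂
  obtain rfl : a₁ = 1 - b₁ := by linarith
  obtain rfl : a₂ = 1 - b₂ := by linarith
  obtain rfl : a = 1 - b := by linarith
  have hc₁ : 0 ≤ (1 - b) * b₁ := mul_nonneg ha.le hb₁
  have hc₂ : 0 ≤ b * b₂ := mul_nonneg hb.le hb₂
  rcases (add_nonneg hc₁ hc₂).eq_or_lt with hc | hc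
  · obtain rfl : b₁ = 0 := by nlinarith
    obtain rfl : b₂ = 0 := by nlinarith
    simp
  -- otherwise `x` is a convex combination of `k₁` and `k₂`
  refine absurd ?_ hx
  have hcx : ((1 - b) * b₁ + b * b₂) • x = ((1 - b) * b₁) • k₁ + (b * b₂) • k₂ := by
    linear_combination (norm := module) -hpq
  convert (convex_convexHull 𝕜 _) hk₁ hk₂ (div_nonneg hc₁ hc.le) (div_nonneg hc₂ hc.le)
    (by rw [← add_div, div_self hc.ne']) using 1
  rw [div_eq_inv_mul, div_eq_inv_mul, mul_smul _ ((1 - b) * b₁), mul_smul _ (b * b₂),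
    ← smul_add, ← hcx, smul_smul, inv_mul_cancel₀ hc.ne', one_smul]

theorem mem_extremePoints_preimage_of_injective (f : E →ᵃ[𝕜] F) (hf : Function.Injective f)
    {A : Set F} {x : E} (hx : f x ∈ A.extremePoints 𝕜) : x ∈ (f ⁻¹' A).extremePoints 𝕜 := by
  refine mem_extremePoints.2
    ⟨Set.mem_preimage.2 (extremePoints_subset hx), fun x₁ hx₁ x₂ hx₂ hx₁₂ => ?_⟩
  have h := (mem_extremePoints.1 hx).2 _ hx₁ _ hx₂
    (image_openSegment 𝕜 f x₁ x₂ ▸ Set.mem_image_of_mem f hx₁₂)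
  exact ⟨hf h.1, hf h.2⟩

theorem add_smul_mem_segment (x y : E) {a b : 𝕜} (ha : 0 ≤ a) (hab : a ≤ b) :
    x + a • y ∈ segment 𝕜 x (x + b • y) := by
  rcases ha.eq_or_lt with rfl | ha
  · simpa using left_mem_segment 𝕜 x (x + b • y)
  have hb : 0 < b := ha.trans_le hab
  refine ⟨1 - a / b, a / b, by linarith [(div_le_one hb).2 hab], (div_pos ha hb).le, by ring, ?_⟩
  rw [smul_add, smul_smul, div_mul_cancel₀ a hb.ne']
  module

theorem segment_add_smul_segment (x y : E) {s t : 𝕜} (hs : 0 ≤ s) (ht : 0 ≤ t) :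
    segment 𝕜 x (x + s • y) + t • segment 𝕜 0 y = segment 𝕜 x (x + (s + t) • y) := by
  rw [← convexHull_pair, ← convexHull_pair, ← convexHull_smul, ← convexHull_add]
  refine subset_antisymm (convexHull_min ?_ (convex_segment _ _)) ?_
  · rintro _ ⟨p, hp, _, ⟨q, hq, rfl⟩, rfl⟩
    simp only [Set.mem_insert_iff, Set.mem_singleton_iff] at hp hq
    rcases hp with hp | hp <;> rcases hq with hq | hq <;> subst p q
    · simpa using left_mem_segment 𝕜 x (x + (s + t) • y)
    · exact add_smul_mem_segment x y ht (by linarith)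
    · simpa using add_smul_mem_segment x y hs (by linarith)
    · simpa [add_assoc, add_smul] using right_mem_segment 𝕜 x (x + (s + t) • y)
  · rw [← convexHull_pair]
    refine convexHull_mono (Set.pair_subset ⟨x, by simp, 0, ⟨0, by simp⟩, by simp⟩ ?_)
    exact ⟨x + s • y, by simp, t • y, ⟨y, by simp, rfl⟩, by simp only [add_assoc, add_smul]⟩

end Convexity

theorem Int.exists_add_le_of_lt_ncard {S : Set ℤ} {r : ℕ} (hr : r < S.ncard) :
    ∃ a ∈ S, ∃ b ∈ S, a + r ≤ b := by
  have hfin : S.Finite := Set.finite_of_ncard_pos (by omega)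
  have hne : S.Nonempty := Set.nonempty_of_ncard_ne_zero (by omega)
  obtain ⟨a, ha, hmin⟩ := S.exists_min_image id hfin hne
  obtain ⟨b, hb, hmax⟩ := S.exists_max_image id hfin hne
  have hS : S.ncard ≤ (Set.Icc a b).ncard :=
    Set.ncard_le_ncard (fun z hz => ⟨hmin z hz, hmax z hz⟩) (Set.finite_Icc a b)
  rw [Set.ncard_eq_toFinset_card' (Set.Icc a b), Set.toFinset_Icc, Int.card_Icc] at hS
  exact ⟨a, ha, b, hb, by omega⟩

theorem exists_int_Icc_covering_of_mem_extremePoints {S : Set ℚ} (hS : Convex ℚ S) {α β : ℚ}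
    (hα : α ∈ S) (hβ : β ∈ S) {m : ℤ} (hm : (m : ℚ) ≤ β - α) {x y : ℤ} (hxy : x ≤ y)
    (hx : (x : ℚ) ∈ S.extremePoints ℚ) (hy : (y : ℚ) ∈ S) :
    ∃ c n : ℤ, m ≤ n ∧ c ≤ x ∧ y ≤ c + n ∧ (c : ℚ) ∈ S ∧ ((c + n : ℤ) : ℚ) ∈ S := by
  have hxS : (x : ℚ) ∈ S := extremePoints_subset hx
  have hxyQ : (x : ℚ) ≤ y := by exact_mod_cast hxy
  by_cases h₁ : m ≤ y - x
  · exact ⟨x, y - x, h₁, le_rfl, by omega, hxS, by simpa using hy⟩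
  have h₁Q : (y : ℚ) - x < m := by exact_mod_cast (by omega : y - x < m)
  by_cases h₂ : (x : ℚ) + m ≤ β
  · refine ⟨x, m, le_rfl, le_rfl, by omega, hxS, hS.ordConnected.out hxS hβ ⟨?_, ?_⟩⟩ <;>
      push_cast <;> linarith
  by_cases h₃ : α ≤ (y : ℚ) - m
  · refine ⟨y - m, m, le_rfl, by omega, by omega, hS.ordConnected.out hα hy ⟨?_, ?_⟩,
      by simpa using hy⟩ <;> push_cast <;> linarith
  -- otherwise `x` lies strictly between `α` and `β`
  have hαx := (mem_extremePoints.1 hx).2 α hα β hβ <| by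
    rw [openSegment_eq_Ioo (by linarith)]
    constructor <;> linarith
  linarith [hαx.1]

namespace FanoPaper

theorem ι_add (x y : NZ) : ι (x + y) = ι x + ι y := by
  ext <;> simp [ι]

theorem ι_zsmul (k : ℤ) (x : NZ) : ι (k • x) = (k : ℚ) • ι x := by
  ext <;> simp [ι]

theorem ι_injective : Function.Injective ι := fun x y h => by
  simp only [ι, Prod.mk.injEq, Int.cast_inj] at h
  exact Prod.ext h.1 h.2

theorem ι_le_ι_iff {x y : NZ} : ι x ≤ ι y ↔ x ≤ y := by
  simp [ι, Prod.le_def]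

theorem dotQ_ι (w x : NZ) : dotQ w (ι x) = dotZ w x := by
  simp [dotQ, dotZ, ι]

/-- Spans the kernel of `dotZ w`. -/
def perp (w : NZ) : NZ := (-w.2, w.1)

theorem dotZ_perp_self (w : NZ) : dotZ w (perp w) = 0 := by
  simp only [dotZ, perp]
  ring

theorem dotZ_add_zsmul_perp (w z : NZ) (j : ℤ) : dotZ w (z + j • perp w) = dotZ w z := by
  simp only [dotZ, perp, Prod.fst_add, Prod.snd_add, Prod.smul_fst, Prod.smul_snd, smul_eq_mul]
  ring

theorem Primitive.ne_zero {v : NZ} (hv : Primitive v) : v ≠ 0 := by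
  rintro rfl
  exact not_isCoprime_zero_zero hv

theorem Primitive.perp {w : NZ} (hw : Primitive w) : Primitive (perp w) := by
  obtain ⟨a, b, hab⟩ := hw
  exact ⟨-b, a, by simp only [FanoPaper.perp]; linarith⟩

theorem Primitive.exists_dotZ_eq_one {w : NZ} (hw : Primitive w) : ∃ e, dotZ w e = 1 := by
  obtain ⟨a, b, hab⟩ := hw
  exact ⟨(a, b), by simp only [dotZ]; linarith⟩

/-! When `dotZ w e = 1`, the pair `(e, perp w)` is a basis of `N` with dual basis
`(dotZ w, wedge e)`: `dotZ w` is the height and `wedge e` the position along a level line. -/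

theorem eq_dotZ_smul_add_wedge_smul {w e : NZ} (he : dotZ w e = 1) (z : NZ) :
    z = dotZ w z • e + wedge e z • perp w := by
  simp only [dotZ, wedge, perp] at he ⊢
  ext
  · simp only [Prod.fst_add, Prod.smul_fst, smul_eq_mul]
    linear_combination (-z.1) * he
  · simp only [Prod.snd_add, Prod.smul_snd, smul_eq_mul]
    linear_combination (-z.2) * he

theorem wedge_add_zsmul_perp {w e : NZ} (he : dotZ w e = 1) (z : NZ) (j : ℤ) :
    wedge e (z + j • perp w) = wedge e z + j := by
  simp only [dotZ, wedge, perp, Prod.fst_add, Prod.snd_add, Prod.smul_fst, Prod.smul_snd,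
    smul_eq_mul] at he ⊢
  linear_combination j * he

theorem eq_of_dotZ_eq_of_wedge_eq {w e : NZ} (he : dotZ w e = 1) {z z' : NZ}
    (h₁ : dotZ w z = dotZ w z') (h₂ : wedge e z = wedge e z') : z = z' := by
  rw [eq_dotZ_smul_add_wedge_smul he z, eq_dotZ_smul_add_wedge_smul he z', h₁, h₂]

/-- The level line `{x : w(x) = h}` of `ℚ²`, parametrised by the coordinate `wedge e`
when `dotZ w e = 1`. -/
def levelLine (w e : NZ) (h : ℚ) : ℚ →ᵃ[ℚ] NQ :=
  AffineMap.lineMap (h • ι e) (h • ι e + ι (perp w))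

theorem levelLine_apply (w e : NZ) (h t : ℚ) :
    levelLine w e h t = h • ι e + t • ι (perp w) := by
  rw [levelLine, AffineMap.lineMap_apply_module', add_sub_cancel_left, add_comm]

theorem levelLine_injective {w e : NZ} (he : dotZ w e = 1) (h : ℚ) :
    Function.Injective (levelLine w e h) := by
  have hperp : perp w ≠ 0 := fun h0 => by
    simpa [h0, wedge] using wedge_add_zsmul_perp he 0 1
  have hperpQ : ι (perp w) ≠ 0 := by
    simpa [ι] using ι_injective.ne hperp
  intro t t' htt'
  simp only [levelLine_apply, add_right_inj] at htt'
  exact smul_left_injective ℚ hperpQ htt'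

theorem smul_levelLine (w e : NZ) (μ h t : ℚ) :
    μ • levelLine w e h t = levelLine w e (μ * h) (μ * t) := by
  simp only [levelLine_apply, smul_add, smul_smul]

theorem ι_zsmul_add_zsmul_perp (w e : NZ) (h c : ℤ) :
    ι (h • e + c • perp w) = levelLine w e h c := by
  rw [levelLine_apply, ι_add, ι_zsmul, ι_zsmul]

theorem ι_eq_levelLine {w e : NZ} (he : dotZ w e = 1) (z : NZ) :
    ι z = levelLine w e (dotZ w z) (wedge e z) := by
  conv_lhs => rw [eq_dotZ_smul_add_wedge_smul he z]
  exact ι_zsmul_add_zsmul_perp w e _ _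

/-- The conditions that `MutationData` imposes on the polygon `G_h`. -/
def IsMutationLayer (P : FanoPolygon) (w v : NZ) (h : ℤ) (S : Set NQ) : Prop :=
  IsLatticePolytope S ∧
    ι '' {x : NZ | x ∈ P.verts ∧ dotZ w x = h} ⊆ S + ((|h| : ℚ) • factor v) ∧
    S + ((|h| : ℚ) • factor v) ⊆ P.slice w h

namespace FanoPolygon

variable (P : FanoPolygon)

theorem convex_hull : Convex ℚ P.hull :=
  convex_convexHull ℚ _

theorem zero_mem_hull : (0 : NQ) ∈ P.hull :=
  interior_subset P.zero_mem_interior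

theorem ι_mem_hull {v : NZ} (hv : v ∈ P.verts) : ι v ∈ P.hull :=
  subset_convexHull ℚ _ ⟨v, hv, rfl⟩

theorem ι_mem_extremePoints_hull {v : NZ} (hv : v ∈ P.verts) :
    ι v ∈ P.hull.extremePoints ℚ := by
  refine mem_extremePoints_convexHull_of_notMem_convexHull_sdiff ⟨v, hv, rfl⟩ ?_
  rw [← Set.image_singleton, ← Set.image_sdiff ι_injective, ← Finset.coe_erase]
  exact P.verts_extreme v hv

theorem finite_setOf_ι_mem_hull : {z : NZ | ι z ∈ P.hull}.Finite := by
  obtain ⟨L, hL⟩ := P.verts.bddBelow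
  obtain ⟨U, hU⟩ := P.verts.bddAbove
  have hbox : P.hull ⊆ Set.Icc (ι L) (ι U) := convexHull_min
    (by rintro _ ⟨z, hz, rfl⟩; exact ⟨ι_le_ι_iff.2 (hL hz), ι_le_ι_iff.2 (hU hz)⟩)
    (convex_Icc _ _)
  exact (Set.finite_Icc L U).subset fun z hz =>
    ⟨ι_le_ι_iff.1 (hbox hz).1, ι_le_ι_iff.1 (hbox hz).2⟩

theorem ι_mem_edge_iff {w z : NZ} : ι z ∈ P.edge w ↔ ι z ∈ P.hull ∧ dotZ w z = P.hMin w := by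
  simp only [edge, Set.mem_ofPred_eq, dotQ_ι, Int.cast_inj]

theorem convex_edge (w : NZ) : Convex ℚ (P.edge w) :=
  P.convex_hull.inter <| convex_hyperplane
    ⟨fun x y => by simp only [dotQ, Prod.fst_add, Prod.snd_add]; ring,
      fun c x => by simp only [dotQ, Prod.smul_fst, Prod.smul_snd, smul_eq_mul]; ring⟩ _

theorem slice_hMin_subset_edge (w : NZ) : P.slice w (P.hMin w) ⊆ P.edge w :=
  convexHull_min (by rintro _ ⟨z, hz, rfl⟩; exact P.ι_mem_edge_iff.2 hz) (P.convex_edge w)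

theorem ι_mem_slice {w z : NZ} (hz : ι z ∈ P.hull) : ι z ∈ P.slice w (dotZ w z) :=
  subset_convexHull ℚ _ ⟨z, ⟨hz, rfl⟩, rfl⟩

theorem le_width_of_forall_mem_edge {w z v : NZ} (hv : v ≠ 0) {r : ℕ}
    (hr : ∀ j : ℕ, j ≤ r → ι (z + (j : ℤ) • v) ∈ P.edge w) : r ≤ P.width w := by
  have hinj : Set.InjOn (fun j : ℕ => z + (j : ℤ) • v) (Finset.range (r + 1)) :=
    fun i _ j _ hij => by exact_mod_cast smul_left_injective ℤ hv (add_left_cancel hij)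
  have hcard := Set.ncard_le_ncard_of_injOn (t := {z : NZ | ι z ∈ P.edge w}) _
    (fun j hj => hr j (Nat.lt_succ_iff.1 (Finset.mem_range.1 hj))) hinj
    (P.finite_setOf_ι_mem_hull.subset fun _ hz => hz.1)
  rw [Set.ncard_coe_finset, Finset.card_range] at hcard
  unfold width
  omega

theorem height_le_width_of_mutationData {w v : NZ} (hv : v ≠ 0) {G : ℤ → Set NQ}
    (hG : MutationData P w v G) : P.height w ≤ P.width w := by
  rcases le_or_gt 0 (P.hMin w) with hMin | hMin
  · unfold height
    omega
  obtain ⟨r, hr⟩ : ∃ r : ℕ, (r : ℤ) = -P.hMin w := ⟨_, Int.toNat_of_nonneg (by omega)⟩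
  obtain ⟨⟨T, hT⟩, hcover, hslice⟩ := hG (P.hMin w) le_rfl (by omega)
  obtain ⟨V, hV, hVmin⟩ := P.verts.exists_mem_eq_inf' P.verts_nonempty (dotZ w)
  obtain ⟨g, hg, -⟩ := hcover ⟨V, ⟨hV, hVmin.symm⟩, rfl⟩
  rw [hT] at hg
  obtain ⟨_, ⟨t, ht, rfl⟩⟩ := convexHull_nonempty_iff.1 ⟨g, hg⟩
  have hseg : segment ℚ (ι t) (ι t + (r : ℚ) • ι v) ⊆
      G (P.hMin w) + (|(P.hMin w : ℚ)|) • factor v := by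
    have hsum := segment_add_smul_segment (𝕜 := ℚ) (ι t) (ι v) le_rfl r.cast_nonneg
    rw [zero_smul, add_zero, segment_same, zero_add] at hsum
    have habs : |(P.hMin w : ℚ)| = r := by
      rw [abs_of_neg (by exact_mod_cast hMin)]
      exact_mod_cast hr.symm
    rw [habs, factor, convexHull_pair, ← hsum, hT]
    exact Set.add_subset_add_right
      (Set.singleton_subset_iff.2 (subset_convexHull ℚ _ ⟨t, ht, rfl⟩))
  have hle : r ≤ P.width w := P.le_width_of_forall_mem_edge hv fun j hj => by
    have hj : ι (t + (j : ℤ) • v) ∈ segment ℚ (ι t) (ι t + (r : ℚ) • ι v) := by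
      rw [ι_add, ι_zsmul]
      exact add_smul_mem_segment _ _ (by positivity) (by exact_mod_cast hj)
    exact P.slice_hMin_subset_edge w (hslice (hseg hj))
  unfold height
  omega

theorem exists_levelLine_mem_hull {w e : NZ} (he : dotZ w e = 1)
    (hk : P.height w ≤ P.width w) {h : ℤ} (h₁ : P.hMin w ≤ h) (h₂ : h < 0) :
    ∃ α β : ℚ, levelLine w e h α ∈ P.hull ∧ levelLine w e h β ∈ P.hull ∧ (-h : ℚ) ≤ β - α := by
  obtain ⟨r, hr⟩ : ∃ r : ℕ, (r : ℤ) = -P.hMin w := ⟨_, Int.toNat_of_nonneg (by omega)⟩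
  have hinj : Set.InjOn (wedge e) {z : NZ | ι z ∈ P.edge w} := fun z hz z' hz' hzz' =>
    eq_of_dotZ_eq_of_wedge_eq he
      ((P.ι_mem_edge_iff.1 hz).2.trans (P.ι_mem_edge_iff.1 hz').2.symm) hzz'
  have hlt : r < (wedge e '' {z : NZ | ι z ∈ P.edge w}).ncard := by
    rw [hinj.ncard_image]
    unfold height width at hk
    omega
  obtain ⟨_, ⟨A, hA, rfl⟩, _, ⟨B, hB, rfl⟩, hAB⟩ := Int.exists_add_le_of_lt_ncard hlt
  -- the edge, shrunk towards the origin by `μ`, lies on the level line of `h`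
  set μ : ℚ := h / P.hMin w
  have hMinQ : (P.hMin w : ℚ) < 0 := by exact_mod_cast (by omega : P.hMin w < 0)
  have hμ : μ * P.hMin w = h := div_mul_cancel₀ _ hMinQ.ne
  have hμ₀ : 0 ≤ μ := div_nonneg_of_nonpos (by exact_mod_cast h₂.le) hMinQ.le
  have hμ₁ : μ ≤ 1 := (div_le_one_of_neg hMinQ).2 (by exact_mod_cast h₁)
  have hshrink : ∀ z, ι z ∈ P.edge w → levelLine w e h (μ * wedge e z) ∈ P.hull := by
    intro z hz
    rw [P.ι_mem_edge_iff] at hz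
    rw [← hμ, ← smul_levelLine, ← hz.2, ← ι_eq_levelLine he]
    exact P.convex_hull.smul_mem_of_zero_mem P.zero_mem_hull hz.1 ⟨hμ₀, hμ₁⟩
  refine ⟨_, _, hshrink A hA, hshrink B hB, ?_⟩
  have hABQ : (wedge e A : ℚ) + r ≤ wedge e B := by exact_mod_cast hAB
  have hrQ : (r : ℚ) = -P.hMin w := by exact_mod_cast hr
  nlinarith

theorem isMutationLayer_segment {w e : NZ} (he : dotZ w e = 1) {h n : ℤ} (hh : h ≤ 0)
    (hn : -h ≤ n) {C : NZ} (hC : dotZ w C = h) (hC₀ : ι C ∈ P.hull)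
    (hC₁ : ι (C + n • perp w) ∈ P.hull)
    (hcov : ∀ z ∈ P.verts, dotZ w z = h → wedge e C ≤ wedge e z ∧ wedge e z ≤ wedge e C + n) :
    IsMutationLayer P w (perp w) h (convexHull ℚ (ι '' {C, C + (n + h) • perp w})) := by
  have hsum : convexHull ℚ (ι '' {C, C + (n + h) • perp w}) + (|h| : ℚ) • factor (perp w) =
      segment ℚ (ι C) (ι C + (n : ℚ) • ι (perp w)) := by
    have habs : (|h| : ℚ) = -h := abs_of_nonpos (by exact_mod_cast hh)
    rw [Set.image_pair, convexHull_pair, ι_add, ι_zsmul, factor, convexHull_pair, habs,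
      segment_add_smul_segment _ _ (by exact_mod_cast (by omega : 0 ≤ n + h))
        (by exact_mod_cast (by omega : 0 ≤ -h))]
    push_cast
    ring_nf
  refine ⟨⟨{C, C + (n + h) • perp w}, by simp⟩, ?_, ?_⟩
  · rintro _ ⟨z, ⟨hz, hzh⟩, rfl⟩
    obtain ⟨hCz, hzC⟩ := hcov z hz hzh
    have hz : z = C + (wedge e z - wedge e C) • perp w :=
      eq_of_dotZ_eq_of_wedge_eq he (by rw [dotZ_add_zsmul_perp, hC, hzh])
        (by rw [wedge_add_zsmul_perp he]; ring)
    rw [hsum, hz, ι_add, ι_zsmul]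
    exact add_smul_mem_segment _ _ (by exact_mod_cast (by omega : 0 ≤ wedge e z - wedge e C))
      (by exact_mod_cast (by omega : wedge e z - wedge e C ≤ n))
  · rw [hsum, ← ι_zsmul, ← ι_add]
    refine (convex_convexHull ℚ _ : Convex ℚ (P.slice w h)).segment_subset ?_ ?_
    · exact hC ▸ P.ι_mem_slice hC₀
    · have hslice := P.ι_mem_slice (w := w) hC₁
      rwa [dotZ_add_zsmul_perp, hC] at hslice

theorem exists_isMutationLayer {w e : NZ} (he : dotZ w e = 1) (hk : P.height w ≤ P.width w)
    {h : ℤ} (h₁ : P.hMin w ≤ h) (h₂ : h ≤ -1) : ∃ S, IsMutationLayer P w (perp w) h S := by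
  set V := P.verts.filter (dotZ w · = h)
  rcases V.eq_empty_or_nonempty with hV | hV
  · refine ⟨∅, ⟨∅, by simp⟩, ?_, by simp⟩
    rintro _ ⟨z, hz, rfl⟩
    simpa [V, hz.2] using Finset.filter_eq_empty_iff.1 hV hz.1
  obtain ⟨X, hX, hXmin⟩ := V.exists_min_image (wedge e) hV
  obtain ⟨Y, hY, hYmax⟩ := V.exists_max_image (wedge e) hV
  have hXY := hXmin Y hY
  rw [Finset.mem_filter] at hX hY
  set L := levelLine w e h
  have hLX : L (wedge e X) = ι X := by rw [ι_eq_levelLine he X, hX.2]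
  have hLY : L (wedge e Y) = ι Y := by rw [ι_eq_levelLine he Y, hY.2]
  have hX_ext : (wedge e X : ℚ) ∈ (L ⁻¹' P.hull).extremePoints ℚ :=
    mem_extremePoints_preimage_of_injective L (levelLine_injective he h)
      (hLX ▸ P.ι_mem_extremePoints_hull hX.1)
  obtain ⟨α, β, hα, hβ, hαβ⟩ := P.exists_levelLine_mem_hull he hk h₁ (by omega)
  obtain ⟨c, n, hn, hcX, hYc, hc, hcn⟩ :=
    exists_int_Icc_covering_of_mem_extremePoints (P.convex_hull.affine_preimage L) hα hβ
      (m := -h) (by push_cast; exact hαβ) hXY hX_ext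
      (show L (wedge e Y) ∈ P.hull from hLY ▸ P.ι_mem_hull hY.1)
  have hdot : dotZ w (h • e + c • perp w) = h := by
    rw [dotZ_add_zsmul_perp]
    simp only [dotZ, Prod.smul_fst, Prod.smul_snd, smul_eq_mul] at he ⊢
    linear_combination h * he
  have hwedge : wedge e (h • e + c • perp w) = c := by
    rw [wedge_add_zsmul_perp he]
    simp only [wedge, Prod.smul_fst, Prod.smul_snd, smul_eq_mul]
    ring
  refine ⟨_, P.isMutationLayer_segment he (by omega) hn hdot ?_ ?_ fun z hz hzh => ?_⟩
  · rwa [ι_zsmul_add_zsmul_perp]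
  · rwa [add_assoc, ← add_smul, ι_zsmul_add_zsmul_perp]
  · have hzV : z ∈ V := Finset.mem_filter.2 ⟨hz, hzh⟩
    rw [hwedge]
    exact ⟨hcX.trans (hXmin z hzV), (hYmax z hzV).trans hYc⟩

theorem admitsMutation_of_height_le_width {w : NZ} (hw : Primitive w)
    (hk : P.height w ≤ P.width w) : AdmitsMutation P w := by
  obtain ⟨e, he⟩ := hw.exists_dotZ_eq_one
  choose! G hG using fun h (h₁ : P.hMin w ≤ h) (h₂ : h ≤ -1) =>
    P.exists_isMutationLayer he hk h₁ h₂
  exact ⟨perp w, hw.perp, dotZ_perp_self w, G, hG⟩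

end FanoPolygon

end FanoPaper

open FanoPaper in
/-- `P` admits a mutation with respect to the inner normal `w` of an edge `E`
iff `k_E ≥ r_E`. -/
theorem admitsMutation_iff_width_ge_height (P : FanoPolygon) (w : NZ)
    (hw : P.IsEdgeNormal w) :
    AdmitsMutation P w ↔ P.height w ≤ (P.width w : ℤ) :=
  ⟨fun ⟨_, hv, _, _, hG⟩ => P.height_le_width_of_mutationData hv.ne_zero hG,
    P.admitsMutation_of_height_le_width hw.1⟩
end

section
/- Let P ⊂ ℚ² be a Fano polygon and let Q = mut_w(P, F) be any mutation of P. Then [M : Λ_P] = [M : Λ_Q], i.e. the index in M of the sublattice generated by the primitive inner normal vectors of the edges is invariant under mutation. -/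
open scoped Pointwise

namespace FanoPaper

section Aux

lemma dotQ_add (u : NZ) (x y : NQ) : dotQ u (x + y) = dotQ u x + dotQ u y := by
  simp only [dotQ, Prod.fst_add, Prod.snd_add]; ring

lemma dotQ_smul (u : NZ) (c : ℚ) (x : NQ) : dotQ u (c • x) = c * dotQ u x := by
  simp only [dotQ, Prod.smul_fst, Prod.smul_snd, smul_eq_mul]; ring

lemma dotQ_zero (u : NZ) : dotQ u (0 : NQ) = 0 := by
  simp [dotQ]

lemma dotQ_iota (u x : NZ) : dotQ u (ι x) = (dotZ u x : ℚ) := by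
  simp [dotQ, dotZ, ι]

lemma dotZ_add_left (a b x : NZ) : dotZ (a + b) x = dotZ a x + dotZ b x := by
  simp only [dotZ, Prod.fst_add, Prod.snd_add]; ring

lemma dotZ_sub_left (a b x : NZ) : dotZ (a - b) x = dotZ a x - dotZ b x := by
  simp only [dotZ, Prod.fst_sub, Prod.snd_sub]; ring

lemma dotZ_smul_left (k : ℤ) (a x : NZ) : dotZ (k • a) x = k * dotZ a x := by
  simp only [dotZ, Prod.smul_fst, Prod.smul_snd, smul_eq_mul]; ring

lemma dotZ_neg_left (a x : NZ) : dotZ (-a) x = - dotZ a x := by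
  simp only [dotZ, Prod.fst_neg, Prod.snd_neg]; ring

lemma le_dotQ_convexHull {S : Set NQ} {u : NZ} {c : ℚ} (h : ∀ y ∈ S, c ≤ dotQ u y) :
    ∀ x ∈ convexHull ℚ S, c ≤ dotQ u x := by
  intro x hx
  have hconv : Convex ℚ {x : NQ | c ≤ dotQ u x} := by
    intro p hp q hq a b ha hb hab
    simp only [Set.mem_setOf_eq] at *
    rw [dotQ_add, dotQ_smul, dotQ_smul]
    calc c = a * c + b * c := by rw [← add_mul, hab, one_mul]
      _ ≤ a * dotQ u p + b * dotQ u q :=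
        add_le_add (mul_le_mul_of_nonneg_left hp ha) (mul_le_mul_of_nonneg_left hq hb)
  exact convexHull_min h hconv hx

lemma hMin_le_hull (P : FanoPolygon) (u : NZ) {x : NQ} (hx : x ∈ P.hull) :
    (P.hMin u : ℚ) ≤ dotQ u x := by
  refine le_dotQ_convexHull ?_ x hx
  rintro y ⟨z, hz, rfl⟩
  rw [dotQ_iota]
  exact_mod_cast Finset.inf'_le (dotZ u) hz

lemma iota_vert_mem_hull (P : FanoPolygon) {x : NZ} (hx : x ∈ P.verts) : ι x ∈ P.hull :=
  subset_convexHull ℚ _ ⟨x, hx, rfl⟩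

/-- Key support lemma: the support function of the mutated polygon. -/
theorem hMin_mut {P Q : FanoPolygon} {w v : NZ} {G : ℤ → Set NQ}
    (hMD : MutationData P w v G) (hQ : Q.hull = mutSet P w v G) (u : NZ) :
    Q.hMin u = P.hMin (u + min (dotZ u v) 0 • w) := by
  set sm : ℤ := min (dotZ u v) 0 with hsm
  set σu : NZ := u + sm • w with hσu
  set f₀ : NQ := if dotZ u v < 0 then ι v else 0 with hf₀def
  have hf₀mem : f₀ ∈ factor v := by
    rw [hf₀def]; unfold factor; split
    · exact subset_convexHull ℚ _ (by simp)
    · exact subset_convexHull ℚ _ (by simp)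
  have hf₀val : dotQ u f₀ = (sm : ℚ) := by
    rw [hf₀def, hsm]; split <;> rename_i hlt
    · rw [dotQ_iota, min_eq_left hlt.le]
    · rw [dotQ_zero, min_eq_right (not_lt.mp hlt)]; simp
  have hfactor_bound : ∀ f ∈ factor v, (sm : ℚ) ≤ dotQ u f := by
    refine le_dotQ_convexHull ?_
    rintro y (rfl | rfl)
    · rw [dotQ_zero]
      exact_mod_cast min_le_right (dotZ u v) 0
    · rw [dotQ_iota]
      exact_mod_cast min_le_left (dotZ u v) 0
  have hval : ∀ x : NZ, dotZ σu x = dotZ u x + sm * dotZ w x := by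
    intro x; rw [hσu, dotZ_add_left, dotZ_smul_left]
  have hslice_bound : ∀ h : ℤ, ∀ p ∈ P.slice w h,
      (P.hMin σu : ℚ) - (sm : ℚ) * (h : ℚ) ≤ dotQ u p := by
    intro h p hp
    refine le_dotQ_convexHull ?_ p hp
    rintro y ⟨x, ⟨hxhull, hxh⟩, rfl⟩
    rw [dotQ_iota]
    have h1 : (P.hMin σu : ℚ) ≤ dotQ σu (ι x) := hMin_le_hull P σu hxhull
    rw [dotQ_iota] at h1
    have h2 : dotZ σu x = dotZ u x + sm * h := by rw [hval, hxh]
    rw [h2] at h1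
    push_cast at h1 ⊢
    linarith
  have hA : ∀ a ∈ ((⋃ h ∈ Finset.Icc (P.hMin w) (-1 : ℤ), G h) ∪
      ⋃ h ∈ Finset.Icc (0 : ℤ) (P.hMax w), (P.slice w h + ((h : ℚ) • factor v))),
      (P.hMin σu : ℚ) ≤ dotQ u a := by
    rintro a (ha | ha)
    · simp only [Set.mem_iUnion, exists_prop] at ha
      obtain ⟨h, hh, hah⟩ := ha
      rw [Finset.mem_Icc] at hh
      obtain ⟨-, -, hGsub⟩ := hMD h hh.1 hh.2
      have hq : (|(h : ℚ)|) • f₀ ∈ (|(h : ℚ)|) • factor v := Set.smul_mem_smul_set hf₀mem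
      have hmem : a + (|(h : ℚ)|) • f₀ ∈ P.slice w h := hGsub (Set.add_mem_add hah hq)
      have hb := hslice_bound h _ hmem
      rw [dotQ_add, dotQ_smul, hf₀val] at hb
      have habs : (|(h : ℚ)|) = -(h : ℚ) := by
        rw [abs_of_nonpos]; exact_mod_cast (by omega : (h:ℤ) ≤ 0)
      rw [habs] at hb
      linarith
    · simp only [Set.mem_iUnion, exists_prop] at ha
      obtain ⟨h, hh, hah⟩ := ha
      rw [Finset.mem_Icc] at hh
      obtain ⟨p, hp, t, ht, rfl⟩ := Set.mem_add.mp hah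
      obtain ⟨f, hf, rfl⟩ := ht
      have hb := hslice_bound h _ hp
      have hfb : ((h:ℚ)) * (sm:ℚ) ≤ (h:ℚ) * dotQ u f :=
        mul_le_mul_of_nonneg_left (hfactor_bound f hf) (by exact_mod_cast hh.1)
      rw [dotQ_add, dotQ_smul]
      linarith
  have hge : (P.hMin σu : ℚ) ≤ (Q.hMin u : ℚ) := by
    obtain ⟨q, hq, hqe⟩ := Q.verts.exists_mem_eq_inf' Q.verts_nonempty (dotZ u)
    have hqe' : Q.hMin u = dotZ u q := hqe
    rw [hqe', ← dotQ_iota]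
    have hqhull : ι q ∈ Q.hull := iota_vert_mem_hull Q hq
    rw [hQ] at hqhull
    exact le_dotQ_convexHull hA _ hqhull
  have hle : (Q.hMin u : ℚ) ≤ (P.hMin σu : ℚ) := by
    obtain ⟨x, hx, hxe⟩ := P.verts.exists_mem_eq_inf' P.verts_nonempty (dotZ σu)
    have hxe' : P.hMin σu = dotZ σu x := hxe
    obtain ⟨h, hh⟩ : ∃ h : ℤ, h = dotZ w x := ⟨dotZ w x, rfl⟩
    have hxhull : ι x ∈ P.hull := iota_vert_mem_hull P hx
    have hvx : dotZ σu x = dotZ u x + sm * h := by rw [hval, hh]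
    by_cases hpos : 0 ≤ h
    · have hy : ι x + (h : ℚ) • f₀ ∈ P.slice w h + ((h : ℚ) • factor v) := by
        refine Set.add_mem_add ?_ (Set.smul_mem_smul_set hf₀mem)
        exact subset_convexHull ℚ _ ⟨x, ⟨hxhull, hh.symm⟩, rfl⟩
      have hyA : ι x + (h : ℚ) • f₀ ∈ mutSet P w v G := by
        refine subset_convexHull ℚ _ (Or.inr ?_)
        simp only [Set.mem_iUnion, exists_prop]
        refine ⟨h, Finset.mem_Icc.mpr ⟨hpos, ?_⟩, hy⟩
        rw [hh]; exact Finset.le_sup' (dotZ w) hx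
      rw [← hQ] at hyA
      have hb := hMin_le_hull Q u hyA
      rw [dotQ_add, dotQ_smul, hf₀val, dotQ_iota] at hb
      calc (Q.hMin u : ℚ) ≤ (dotZ u x : ℚ) + (h:ℚ) * (sm:ℚ) := hb
        _ = ((dotZ u x + sm * h : ℤ) : ℚ) := by push_cast; ring
        _ = (P.hMin σu : ℚ) := by rw [hxe', hvx]
    · have hhle : h ≤ -1 := by omega
      have hhge : P.hMin w ≤ h := by rw [hh]; exact Finset.inf'_le (dotZ w) hx
      have hmemG : ι x ∈ G h + ((|(h:ℚ)|) • factor v) := by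
        refine (hMD h hhge hhle).2.1 ?_
        exact ⟨x, ⟨hx, hh.symm⟩, rfl⟩
      obtain ⟨g, hg, t, ht, hgt⟩ := Set.mem_add.mp hmemG
      obtain ⟨f, hf, rfl⟩ := ht
      have hgt' : g + (|(h:ℚ)|) • f = ι x := hgt
      have hgA : g ∈ mutSet P w v G := by
        refine subset_convexHull ℚ _ (Or.inl ?_)
        simp only [Set.mem_iUnion, exists_prop]
        exact ⟨h, Finset.mem_Icc.mpr ⟨hhge, hhle⟩, hg⟩
      rw [← hQ] at hgA
      have hb := hMin_le_hull Q u hgA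
      have habs : (|(h : ℚ)|) = -(h : ℚ) := by
        rw [abs_of_nonpos]; exact_mod_cast (by omega : (h:ℤ) ≤ 0)
      have hfb : (|(h:ℚ)|) * (sm:ℚ) ≤ (|(h:ℚ)|) * dotQ u f :=
        mul_le_mul_of_nonneg_left (hfactor_bound f hf) (abs_nonneg _)
      have hgx : (dotZ u x : ℚ) = dotQ u g + (|(h:ℚ)|) * dotQ u f := by
        rw [← dotQ_iota, ← hgt', dotQ_add, dotQ_smul]
      have hfin : dotQ u g ≤ (P.hMin σu : ℚ) := by
        have h2 : (P.hMin σu : ℚ) = (dotZ u x : ℚ) + (sm:ℚ) * (h:ℚ) := by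
          rw [hxe', hvx]; push_cast; ring
        rw [h2]
        rw [habs] at hfb hgx
        linarith
      linarith
  exact_mod_cast le_antisymm hle hge

end Aux

end FanoPaper
namespace FanoPaper

section Char

/-- Cofinal strict concavity of the support function at `u`. -/
def Cof (R : FanoPolygon) (u : NZ) : Prop :=
  ∃ z : NZ, ∀ k₀ : ℤ, ∃ k : ℤ, k₀ ≤ k ∧
    R.hMin (k • u + z) + R.hMin (k • u - z) < 2 * k * R.hMin u

lemma primitive_ne_zero {u : NZ} (h : Primitive u) : u ≠ 0 := by
  rintro rfl
  exact not_isUnit_zero (isCoprime_zero_left.mp h)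

lemma sum_sq_pos {u : NZ} (h : u ≠ 0) : 0 < u.1 * u.1 + u.2 * u.2 := by
  have h' : u.1 ≠ 0 ∨ u.2 ≠ 0 := by
    by_contra hc
    push_neg at hc
    exact h (Prod.ext_iff.mpr ⟨hc.1, hc.2⟩)
  rcases h' with h1 | h1
  · nlinarith [mul_self_pos.mpr h1, mul_self_nonneg u.2]
  · nlinarith [mul_self_pos.mpr h1, mul_self_nonneg u.1]

lemma cof_of_pair {R : FanoPolygon} {u : NZ} {x y : NZ} (hx : x ∈ R.verts) (hy : y ∈ R.verts)
    (hxm : dotZ u x = R.hMin u) (hym : dotZ u y = R.hMin u) {z : NZ}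
    (hz : dotZ z x < dotZ z y) : Cof R u := by
  refine ⟨z, fun k₀ => ⟨k₀, le_refl _, ?_⟩⟩
  have h1 : R.hMin (k₀ • u + z) ≤ dotZ (k₀ • u + z) x := Finset.inf'_le _ hx
  have h2 : R.hMin (k₀ • u - z) ≤ dotZ (k₀ • u - z) y := Finset.inf'_le _ hy
  rw [dotZ_add_left, dotZ_smul_left, hxm] at h1
  rw [dotZ_sub_left, dotZ_smul_left, hym] at h2
  nlinarith [h1, h2, hz]

theorem isEdgeNormal_iff (R : FanoPolygon) (u : NZ) :
    R.IsEdgeNormal u ↔ Primitive u ∧ Cof R u := by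
  constructor
  · rintro ⟨hprim, hcard⟩
    refine ⟨hprim, ?_⟩
    obtain ⟨x, hxf, y, hyf, hxy⟩ := Finset.one_lt_card.mp (lt_of_lt_of_le one_lt_two hcard)
    obtain ⟨hx, hxm⟩ := Finset.mem_filter.mp hxf
    obtain ⟨hy, hym⟩ := Finset.mem_filter.mp hyf
    have hne : dotZ (u.2, -u.1) x ≠ dotZ (u.2, -u.1) y := by
      intro he
      apply hxy
      have h1 : dotZ u x = dotZ u y := by rw [hxm, hym]
      have hs := sum_sq_pos (primitive_ne_zero hprim)
      simp only [dotZ] at he h1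
      have hne0 : u.1 * u.1 + u.2 * u.2 ≠ 0 := ne_of_gt hs
      have e1 : (u.1 * u.1 + u.2 * u.2) * (x.1 - y.1) = 0 := by linear_combination u.1 * h1 + u.2 * he
      have e2 : (u.1 * u.1 + u.2 * u.2) * (x.2 - y.2) = 0 := by linear_combination u.2 * h1 - u.1 * he
      have hx1 : x.1 = y.1 := by
        rcases mul_eq_zero.mp e1 with h | h
        · exact absurd h hne0
        · omega
      have hx2 : x.2 = y.2 := by
        rcases mul_eq_zero.mp e2 with h | h
        · exact absurd h hne0
        · omega
      exact Prod.ext_iff.mpr ⟨hx1, hx2⟩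
    rcases lt_or_gt_of_ne hne with hlt | hgt
    · exact cof_of_pair hx hy hxm hym hlt
    · exact cof_of_pair hy hx hym hxm hgt
  · rintro ⟨hprim, z, hcof⟩
    refine ⟨hprim, ?_⟩
    by_contra hcard
    push_neg at hcard
    obtain ⟨x, hx, hxm⟩ := R.verts.exists_mem_eq_inf' R.verts_nonempty (dotZ u)
    have hxm' : dotZ u x = R.hMin u := hxm.symm
    have hxf : x ∈ R.verts.filter (fun y => dotZ u y = R.hMin u) :=
      Finset.mem_filter.mpr ⟨hx, hxm'⟩
    have huniq : ∀ y ∈ R.verts, y ≠ x → R.hMin u + 1 ≤ dotZ u y := by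
      intro y hy hne
      have h1 : R.hMin u ≤ dotZ u y := Finset.inf'_le _ hy
      have h2 : dotZ u y ≠ R.hMin u := by
        intro he
        have hyf : y ∈ R.verts.filter (fun y => dotZ u y = R.hMin u) :=
          Finset.mem_filter.mpr ⟨hy, he⟩
        have := Finset.one_lt_card.mpr ⟨x, hxf, y, hyf, Ne.symm hne⟩
        omega
      omega
    have hBne := R.verts_nonempty
    set B : ℤ := R.verts.sup' hBne (fun y => |dotZ z y|) with hB
    have hBx : |dotZ z x| ≤ B := by rw [hB]; exact Finset.le_sup' (fun y => |dotZ z y|) hx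
    have hB0 : 0 ≤ B := le_trans (abs_nonneg _) hBx
    have habs0 : 0 ≤ |dotZ z x| := abs_nonneg _
    obtain ⟨k, hk, hstrict⟩ := hcof (B + |dotZ z x| + 1)
    have hk0 : 0 ≤ k := by omega
    have habsx1 : dotZ z x ≤ |dotZ z x| := le_abs_self _
    have habsx2 : -|dotZ z x| ≤ dotZ z x := neg_abs_le _
    have hlow1 : k * R.hMin u + dotZ z x ≤ R.hMin (k • u + z) := by
      have : ∀ y ∈ R.verts, k * R.hMin u + dotZ z x ≤ dotZ (k • u + z) y := by
        intro y hy
        rw [dotZ_add_left, dotZ_smul_left]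
        rcases eq_or_ne y x with rfl | hne
        · rw [← hxm']
        · have h1 := huniq y hy hne
          have hzy : -B ≤ dotZ z y := by
            have := Finset.le_sup' (fun y => |dotZ z y|) hy
            have := neg_abs_le (dotZ z y)
            omega
          have h2 : k * (R.hMin u + 1) ≤ k * dotZ u y := mul_le_mul_of_nonneg_left h1 hk0
          nlinarith
      exact Finset.le_inf' _ _ this
    have hlow2 : k * R.hMin u - dotZ z x ≤ R.hMin (k • u - z) := by
      have : ∀ y ∈ R.verts, k * R.hMin u - dotZ z x ≤ dotZ (k • u - z) y := by
        intro y hy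
        rw [dotZ_sub_left, dotZ_smul_left]
        rcases eq_or_ne y x with rfl | hne
        · rw [← hxm']
        · have h1 := huniq y hy hne
          have hzy : dotZ z y ≤ B := by
            have := Finset.le_sup' (fun y => |dotZ z y|) hy
            have := le_abs_self (dotZ z y)
            omega
          have h2 : k * (R.hMin u + 1) ≤ k * dotZ u y := mul_le_mul_of_nonneg_left h1 hk0
          nlinarith
      exact Finset.le_inf' _ _ this
    nlinarith [hstrict, hlow1, hlow2]

end Char

end FanoPaper
namespace FanoPaper

section Alg

lemma dotQ_neg_left (u : NZ) (x : NQ) : dotQ (-u) x = - dotQ u x := by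
  simp only [dotQ, Prod.fst_neg, Prod.snd_neg]; push_cast; ring

lemma primitive_neg {u : NZ} (h : Primitive u) : Primitive (-u) := by
  obtain ⟨a, b, hab⟩ := h
  refine ⟨-a, -b, ?_⟩
  simp only [Prod.fst_neg, Prod.snd_neg]
  linear_combination hab

lemma primitive_shear {u w v : NZ} (hwv : dotZ w v = 0) (hu : Primitive u) :
    Primitive (u + dotZ u v • w) := by
  obtain ⟨a, b, hab⟩ := hu
  refine ⟨a - (a * w.1 + b * w.2) * v.1, b - (a * w.1 + b * w.2) * v.2, ?_⟩
  simp only [dotZ] at hwv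
  simp only [Prod.fst_add, Prod.snd_add, Prod.smul_fst, Prod.smul_snd, smul_eq_mul, dotZ]
  linear_combination hab - (a * w.1 + b * w.2) * (u.1 * v.1 + u.2 * v.2) * hwv

lemma perp_classify {v u w : NZ} (hv : Primitive v) (hu : Primitive u) (hw : Primitive w)
    (h1 : dotZ u v = 0) (h2 : dotZ w v = 0) : u = w ∨ u = -w := by
  obtain ⟨a, b, hab⟩ := hv
  simp only [dotZ] at h1 h2
  have e1 : u.1 = (b * u.1 - a * u.2) * v.2 := by linear_combination (-u.1) * hab + a * h1
  have e2 : u.2 = -((b * u.1 - a * u.2) * v.1) := by linear_combination (-u.2) * hab + b * h1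
  have ew1 : w.1 = (b * w.1 - a * w.2) * v.2 := by linear_combination (-w.1) * hab + a * h2
  have ew2 : w.2 = -((b * w.1 - a * w.2) * v.1) := by linear_combination (-w.2) * hab + b * h2
  have hcuu : IsUnit (b * u.1 - a * u.2) :=
    hu.isUnit_of_dvd' ⟨v.2, e1⟩ ⟨-v.1, by linear_combination e2⟩
  have hcwu : IsUnit (b * w.1 - a * w.2) :=
    hw.isUnit_of_dvd' ⟨v.2, ew1⟩ ⟨-v.1, by linear_combination ew2⟩
  rcases Int.isUnit_iff.mp hcuu with h | h <;> rcases Int.isUnit_iff.mp hcwu with h' | h' <;>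
    rw [h] at e1 e2 <;> rw [h'] at ew1 ew2
  · exact Or.inl (Prod.ext_iff.mpr ⟨by omega, by omega⟩)
  · refine Or.inr (Prod.ext_iff.mpr ⟨?_, ?_⟩) <;> simp only [Prod.fst_neg, Prod.snd_neg] <;> omega
  · refine Or.inr (Prod.ext_iff.mpr ⟨?_, ?_⟩) <;> simp only [Prod.fst_neg, Prod.snd_neg] <;> omega
  · exact Or.inl (Prod.ext_iff.mpr ⟨by omega, by omega⟩)

lemma NZ_shear_add (k s t : ℤ) (u z w : NZ) :
    (k • u + z) + (k * s + t) • w = k • (u + s • w) + (z + t • w) := by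
  rw [Prod.ext_iff]
  simp only [Prod.fst_add, Prod.snd_add, Prod.smul_fst, Prod.smul_snd, smul_eq_mul]
  constructor <;> ring

lemma NZ_shear_sub (k s t : ℤ) (u z w : NZ) :
    (k • u - z) + (k * s - t) • w = k • (u + s • w) - (z + t • w) := by
  rw [Prod.ext_iff]
  simp only [Prod.fst_add, Prod.snd_add, Prod.fst_sub, Prod.snd_sub, Prod.smul_fst,
    Prod.smul_snd, smul_eq_mul]
  constructor <;> ring

lemma one_le_hMax (P : FanoPolygon) {w : NZ} (hw : w ≠ 0) : 1 ≤ P.hMax w := by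
  by_contra hc
  push_neg at hc
  have hall : ∀ x ∈ P.verts, dotZ w x ≤ 0 := by
    intro x hx
    have h1 : dotZ w x ≤ P.hMax w := Finset.le_sup' (dotZ w) hx
    omega
  have hhull : ∀ y ∈ P.hull, dotQ w y ≤ 0 := by
    intro y hy
    have h1 : (0 : ℚ) ≤ dotQ (-w) y := by
      refine le_dotQ_convexHull ?_ y hy
      rintro p ⟨x, hx, rfl⟩
      rw [dotQ_iota, dotZ_neg_left]
      have := hall x hx
      exact_mod_cast neg_nonneg.mpr (by exact_mod_cast this)
    rw [dotQ_neg_left] at h1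
    linarith
  have hmem : P.hull ∈ nhds (0 : NQ) := mem_interior_iff_mem_nhds.mp P.zero_mem_interior
  have hcont : Continuous (fun t : ℚ => ((t * (w.1 : ℚ), t * (w.2 : ℚ)) : NQ)) := by
    exact (continuous_id.mul continuous_const).prodMk (continuous_id.mul continuous_const)
  have h0 : ((0 : ℚ) * (w.1 : ℚ), (0 : ℚ) * (w.2 : ℚ)) = (0 : NQ) := by
    simp
  have hpre : (fun t : ℚ => ((t * (w.1 : ℚ), t * (w.2 : ℚ)) : NQ)) ⁻¹' P.hull ∈ nhds (0 : ℚ) := by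
    have := hcont.continuousAt (x := (0 : ℚ))
    apply this.preimage_mem_nhds
    rw [h0]
    exact hmem
  obtain ⟨l, r, h0lr, hsub⟩ := mem_nhds_iff_exists_Ioo_subset.mp hpre
  have hr : 0 < r := h0lr.2
  have hl : l < 0 := h0lr.1
  have ht : r / 2 ∈ Set.Ioo l r := ⟨by linarith, by linarith⟩
  have hyt := hsub ht
  have hle := hhull _ hyt
  have hsq : (0 : ℚ) < (w.1 : ℚ) * w.1 + (w.2 : ℚ) * w.2 := by exact_mod_cast sum_sq_pos hw
  have hval : dotQ w ((r / 2 * (w.1 : ℚ), r / 2 * (w.2 : ℚ)) : NQ)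
      = r / 2 * ((w.1 : ℚ) * w.1 + (w.2 : ℚ) * w.2) := by
    simp only [dotQ]; ring
  rw [hval] at hle
  nlinarith

end Alg

end FanoPaper
namespace FanoPaper

section Main

lemma dotZ_neg_right (u x : NZ) : dotZ u (-x) = - dotZ u x := by
  simp only [dotZ, Prod.fst_neg, Prod.snd_neg]; ring

lemma NZ_unshear_add (k s t : ℤ) (u z w : NZ) :
    (k • u + z) - (k * s + t) • w = k • (u - s • w) + (z - t • w) := by
  rw [Prod.ext_iff]
  simp only [Prod.fst_add, Prod.snd_add, Prod.fst_sub, Prod.snd_sub, Prod.smul_fst,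
    Prod.smul_snd, smul_eq_mul]
  constructor <;> ring

lemma NZ_unshear_sub (k s t : ℤ) (u z w : NZ) :
    (k • u - z) - (k * s - t) • w = k • (u - s • w) - (z - t • w) := by
  rw [Prod.ext_iff]
  simp only [Prod.fst_add, Prod.snd_add, Prod.fst_sub, Prod.snd_sub, Prod.smul_fst,
    Prod.smul_snd, smul_eq_mul]
  constructor <;> ring

variable {P Q : FanoPolygon} {w v : NZ} {G : ℤ → Set NQ}

/-- Every edge normal of the mutation `Q` lies in `Λ_P`. -/
lemma normals_mut_subset (hMD : MutationData P w v G) (hQ : Q.hull = mutSet P w v G)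
    (hPw : P.IsEdgeNormal w) (hv : Primitive v) (hwv : dotZ w v = 0)
    {u : NZ} (hu : Q.IsEdgeNormal u) : u ∈ P.normalLattice := by
  have hkey := hMin_mut hMD hQ
  have hwmem : w ∈ P.normalLattice := Submodule.subset_span hPw
  obtain ⟨hprim, hcof⟩ := (isEdgeNormal_iff Q u).mp hu
  obtain ⟨z, hz⟩ := hcof
  rcases lt_trichotomy (dotZ u v) 0 with hneg | hzero | hpos
  · have hLprim : Primitive (u + dotZ u v • w) := primitive_shear hwv hprim
    have hLcof : Cof P (u + dotZ u v • w) := by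
      refine ⟨z + dotZ z v • w, fun k₀ => ?_⟩
      obtain ⟨k, hk, hstrict⟩ := hz (max k₀ (|dotZ z v| + 1))
      have hkt : |dotZ z v| + 1 ≤ k := le_trans (le_max_right _ _) hk
      have habs1 := le_abs_self (dotZ z v)
      have habs2 := neg_abs_le (dotZ z v)
      have hk0 : 0 ≤ k := by have := abs_nonneg (dotZ z v); omega
      refine ⟨k, le_trans (le_max_left _ _) hk, ?_⟩
      have hks : k * dotZ u v ≤ k * (-1) := mul_le_mul_of_nonneg_left (by omega) hk0
      have hmin1 : min (dotZ (k • u + z) v) 0 = k * dotZ u v + dotZ z v := by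
        rw [dotZ_add_left, dotZ_smul_left]
        exact min_eq_left (by omega)
      have hmin2 : min (dotZ (k • u - z) v) 0 = k * dotZ u v - dotZ z v := by
        rw [dotZ_sub_left, dotZ_smul_left]
        exact min_eq_left (by omega)
      have hminu : min (dotZ u v) 0 = dotZ u v := min_eq_left (by omega)
      have e1 := hkey (k • u + z)
      rw [hmin1, NZ_shear_add] at e1
      have e2 := hkey (k • u - z)
      rw [hmin2, NZ_shear_sub] at e2
      have e3 := hkey u
      rw [hminu] at e3
      rw [e1, e2, e3] at hstrict
      exact hstrict
    have h1 : (u + dotZ u v • w) ∈ P.normalLattice :=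
      Submodule.subset_span ((isEdgeNormal_iff P _).mpr ⟨hLprim, hLcof⟩)
    have h2 : u = (u + dotZ u v • w) - dotZ u v • w := by abel
    rw [h2]
    exact Submodule.sub_mem _ h1 (Submodule.smul_mem _ _ hwmem)
  · rcases perp_classify hv hprim hPw.1 hzero hwv with h | h
    · rw [h]; exact hwmem
    · rw [h]; exact Submodule.neg_mem _ hwmem
  · have hcofP : Cof P u := by
      refine ⟨z, fun k₀ => ?_⟩
      obtain ⟨k, hk, hstrict⟩ := hz (max k₀ (|dotZ z v| + 1))
      have hkt : |dotZ z v| + 1 ≤ k := le_trans (le_max_right _ _) hk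
      have habs1 := le_abs_self (dotZ z v)
      have habs2 := neg_abs_le (dotZ z v)
      have hk0 : 0 ≤ k := by have := abs_nonneg (dotZ z v); omega
      refine ⟨k, le_trans (le_max_left _ _) hk, ?_⟩
      have hks : k * 1 ≤ k * dotZ u v := mul_le_mul_of_nonneg_left (by omega) hk0
      have hmin1 : min (dotZ (k • u + z) v) 0 = 0 := by
        rw [dotZ_add_left, dotZ_smul_left]
        exact min_eq_right (by omega)
      have hmin2 : min (dotZ (k • u - z) v) 0 = 0 := by
        rw [dotZ_sub_left, dotZ_smul_left]
        exact min_eq_right (by omega)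
      have hminu : min (dotZ u v) 0 = 0 := min_eq_right (by omega)
      have e1 := hkey (k • u + z)
      rw [hmin1, zero_smul, add_zero] at e1
      have e2 := hkey (k • u - z)
      rw [hmin2, zero_smul, add_zero] at e2
      have e3 := hkey u
      rw [hminu, zero_smul, add_zero] at e3
      rw [e1, e2, e3] at hstrict
      exact hstrict
    exact Submodule.subset_span ((isEdgeNormal_iff P u).mpr ⟨hprim, hcofP⟩)

/-- `-w` is an edge normal of the mutation `Q`. -/
lemma negw_isEdgeNormal (hMD : MutationData P w v G) (hQ : Q.hull = mutSet P w v G)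
    (hPw : P.IsEdgeNormal w) (hv : Primitive v) (hwv : dotZ w v = 0) :
    Q.IsEdgeNormal (-w) := by
  have hkey := hMin_mut hMD hQ
  refine (isEdgeNormal_iff Q (-w)).mpr ⟨primitive_neg hPw.1, ?_⟩
  obtain ⟨a, b, hab⟩ := hv
  have hzv : dotZ (a, b) v = 1 := by simpa [dotZ] using hab
  refine ⟨(a, b), fun k => ⟨k, le_refl _, ?_⟩⟩
  have hm1 : dotZ (k • (-w) + (a, b)) v = 1 := by
    rw [dotZ_add_left, dotZ_smul_left, dotZ_neg_left, hwv, hzv]; ring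
  have hm2 : dotZ (k • (-w) - (a, b)) v = -1 := by
    rw [dotZ_sub_left, dotZ_smul_left, dotZ_neg_left, hwv, hzv]; ring
  have hminw : min (dotZ (-w) v) 0 = 0 := by rw [dotZ_neg_left, hwv]; simp
  have e1 := hkey (k • (-w) + (a, b))
  rw [hm1, show min (1 : ℤ) 0 = 0 from rfl, zero_smul, add_zero] at e1
  have e2 := hkey (k • (-w) - (a, b))
  rw [hm2, show min (-1 : ℤ) 0 = -1 from rfl] at e2
  have e3 := hkey (-w)
  rw [hminw, zero_smul, add_zero] at e3
  rw [e1, e2, e3]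
  obtain ⟨p, hp, hpe⟩ := P.verts.exists_mem_eq_sup' P.verts_nonempty (dotZ w)
  have hpe' : P.hMax w = dotZ w p := hpe
  have hM : 1 ≤ dotZ w p := by
    have := one_le_hMax P (primitive_ne_zero hPw.1)
    omega
  have b3 : P.hMin (-w) = - dotZ w p := by
    have h1 : P.hMin (-w) ≤ - dotZ w p := by
      have := Finset.inf'_le (dotZ (-w)) hp
      rw [dotZ_neg_left] at this
      exact this
    have h2 : - dotZ w p ≤ P.hMin (-w) := by
      have hall : ∀ y ∈ P.verts, - dotZ w p ≤ dotZ (-w) y := by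
        intro y hy
        rw [dotZ_neg_left]
        have := Finset.le_sup' (dotZ w) hy
        omega
      exact Finset.le_inf' _ _ hall
    omega
  have b1 : P.hMin (k • (-w) + (a, b)) ≤ -(k * dotZ w p) + dotZ (a, b) p := by
    have h1 : P.hMin (k • (-w) + (a, b)) ≤ dotZ (k • (-w) + (a, b)) p := Finset.inf'_le _ hp
    have h2 : dotZ (k • (-w) + (a, b)) p = -(k * dotZ w p) + dotZ (a, b) p := by
      rw [dotZ_add_left, dotZ_smul_left, dotZ_neg_left]; ring
    omega
  have b2 : P.hMin (k • (-w) - (a, b) + (-1) • w) ≤ -(k * dotZ w p) - dotZ (a, b) p - dotZ w p := by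
    have h1 : P.hMin (k • (-w) - (a, b) + (-1) • w) ≤ dotZ (k • (-w) - (a, b) + (-1) • w) p :=
      Finset.inf'_le _ hp
    have h2 : dotZ (k • (-w) - (a, b) + (-1) • w) p
        = -(k * dotZ w p) - dotZ (a, b) p - dotZ w p := by
      rw [dotZ_add_left, dotZ_sub_left, dotZ_smul_left, dotZ_smul_left, dotZ_neg_left]; ring
    omega
  rw [b3]
  nlinarith [b1, b2, hM]

/-- Every edge normal of `P` lies in `Λ_Q`. -/
lemma normals_subset_mut (hMD : MutationData P w v G) (hQ : Q.hull = mutSet P w v G)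
    (hPw : P.IsEdgeNormal w) (hv : Primitive v) (hwv : dotZ w v = 0)
    (hwQ : w ∈ Q.normalLattice)
    {n : NZ} (hn : P.IsEdgeNormal n) : n ∈ Q.normalLattice := by
  have hkey := hMin_mut hMD hQ
  have hkey' : ∀ m : NZ, P.hMin m = Q.hMin (m - min (dotZ m v) 0 • w) := by
    intro m
    have h2 : dotZ (m - min (dotZ m v) 0 • w) v = dotZ m v := by
      rw [dotZ_sub_left, dotZ_smul_left, hwv]; ring
    have h1 := hkey (m - min (dotZ m v) 0 • w)
    rw [h2, sub_add_cancel] at h1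
    exact h1.symm
  obtain ⟨hprim, hcof⟩ := (isEdgeNormal_iff P n).mp hn
  obtain ⟨z, hz⟩ := hcof
  rcases lt_trichotomy (dotZ n v) 0 with hneg | hzero | hpos
  · have hLprim : Primitive (n - dotZ n v • w) := by
      have h := primitive_shear (w := w) (v := -v) (by rw [dotZ_neg_right, hwv]; ring) hprim
      rwa [dotZ_neg_right, neg_smul, ← sub_eq_add_neg] at h
    have hLcof : Cof Q (n - dotZ n v • w) := by
      refine ⟨z - dotZ z v • w, fun k₀ => ?_⟩
      obtain ⟨k, hk, hstrict⟩ := hz (max k₀ (|dotZ z v| + 1))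
      have hkt : |dotZ z v| + 1 ≤ k := le_trans (le_max_right _ _) hk
      have habs1 := le_abs_self (dotZ z v)
      have habs2 := neg_abs_le (dotZ z v)
      have hk0 : 0 ≤ k := by have := abs_nonneg (dotZ z v); omega
      refine ⟨k, le_trans (le_max_left _ _) hk, ?_⟩
      have hks : k * dotZ n v ≤ k * (-1) := mul_le_mul_of_nonneg_left (by omega) hk0
      have hmin1 : min (dotZ (k • n + z) v) 0 = k * dotZ n v + dotZ z v := by
        rw [dotZ_add_left, dotZ_smul_left]
        exact min_eq_left (by omega)
      have hmin2 : min (dotZ (k • n - z) v) 0 = k * dotZ n v - dotZ z v := by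
        rw [dotZ_sub_left, dotZ_smul_left]
        exact min_eq_left (by omega)
      have hminu : min (dotZ n v) 0 = dotZ n v := min_eq_left (by omega)
      have e1 := hkey' (k • n + z)
      rw [hmin1, NZ_unshear_add] at e1
      have e2 := hkey' (k • n - z)
      rw [hmin2, NZ_unshear_sub] at e2
      have e3 := hkey' n
      rw [hminu] at e3
      rw [e1, e2, e3] at hstrict
      exact hstrict
    have h1 : (n - dotZ n v • w) ∈ Q.normalLattice :=
      Submodule.subset_span ((isEdgeNormal_iff Q _).mpr ⟨hLprim, hLcof⟩)
    have h2 : n = (n - dotZ n v • w) + dotZ n v • w := by abel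
    rw [h2]
    exact Submodule.add_mem _ h1 (Submodule.smul_mem _ _ hwQ)
  · rcases perp_classify hv hprim hPw.1 hzero hwv with h | h
    · rw [h]; exact hwQ
    · rw [h]; exact Submodule.neg_mem _ hwQ
  · have hcofQ : Cof Q n := by
      refine ⟨z, fun k₀ => ?_⟩
      obtain ⟨k, hk, hstrict⟩ := hz (max k₀ (|dotZ z v| + 1))
      have hkt : |dotZ z v| + 1 ≤ k := le_trans (le_max_right _ _) hk
      have habs1 := le_abs_self (dotZ z v)
      have habs2 := neg_abs_le (dotZ z v)
      have hk0 : 0 ≤ k := by have := abs_nonneg (dotZ z v); omega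
      refine ⟨k, le_trans (le_max_left _ _) hk, ?_⟩
      have hks : k * 1 ≤ k * dotZ n v := mul_le_mul_of_nonneg_left (by omega) hk0
      have hmin1 : min (dotZ (k • n + z) v) 0 = 0 := by
        rw [dotZ_add_left, dotZ_smul_left]
        exact min_eq_right (by omega)
      have hmin2 : min (dotZ (k • n - z) v) 0 = 0 := by
        rw [dotZ_sub_left, dotZ_smul_left]
        exact min_eq_right (by omega)
      have hminu : min (dotZ n v) 0 = 0 := min_eq_right (by omega)
      have e1 := hkey' (k • n + z)
      rw [hmin1, zero_smul, sub_zero] at e1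
      have e2 := hkey' (k • n - z)
      rw [hmin2, zero_smul, sub_zero] at e2
      have e3 := hkey' n
      rw [hminu, zero_smul, sub_zero] at e3
      rw [e1, e2, e3] at hstrict
      exact hstrict
    exact Submodule.subset_span ((isEdgeNormal_iff Q n).mpr ⟨hprim, hcofQ⟩)

end Main

end FanoPaper

open FanoPaper in
/-- The index of the sublattice of `M` generated by the primitive inner edge normals is
a mutation invariant. -/
theorem latticeIndex_invariant_under_mutation (P Q : FanoPolygon)
    (h : IsMutation P Q) :
    P.latticeIndex = Q.latticeIndex := by
  obtain ⟨w, v, hPw, hv, hwv, G, hMD, hQhull⟩ := h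
  have hnegw : Q.IsEdgeNormal (-w) := negw_isEdgeNormal hMD hQhull hPw hv hwv
  have hwQ : w ∈ Q.normalLattice := by
    have h1 : (-w) ∈ Q.normalLattice := Submodule.subset_span hnegw
    have h2 := Submodule.neg_mem _ h1
    rwa [neg_neg] at h2
  have hPle : P.normalLattice ≤ Q.normalLattice :=
    Submodule.span_le.mpr (fun n hn => normals_subset_mut hMD hQhull hPw hv hwv hwQ hn)
  have hQle : Q.normalLattice ≤ P.normalLattice :=
    Submodule.span_le.mpr (fun u hu => normals_mut_subset hMD hQhull hPw hv hwv hu)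
  have heq : P.normalLattice = Q.normalLattice := le_antisymm hPle hQle
  unfold FanoPolygon.latticeIndex
  rw [heq]
end
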